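/- arXiv:1704.00125 — 10 statements merged into one kernel-verified Lean document; each statement's English description precedes it below -/
import Mathlib

section
/- Let L = (H, f, ℓ) be a walk-preserving overlay of a graph G, let x, y ∈ V(H), and let n be a natural number with n ≤ ℓ(x). Suppose that y is the unique preimage of f(y) under f, i.e., f⁻¹(f(y)) = {y}. Then G contains a walk of length n from f(x) to f(y) if and only if H contains a walk of length n from x to y. -/
/-! Walk preservation lets a walk of `G` starting at `f x` be lifted step by step to `H` as long
as the level `ℓ` stays positive; the level drops by at most one per step, so walks of length at
most `ℓ x` lift. Since `y` is the only preimage of `f y`, a lift of a walk ending at `f y` ends at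
`y`. -/

open SimpleGraph

section OverlayDefs

variable {V W T : Type}

/-- `f` is a graph homomorphism from `H` to `G` (edges map to edges). -/
def IsHomOn (H : SimpleGraph W) (G : SimpleGraph V) (f : W → V) : Prop :=
  ∀ ⦃x y : W⦄, H.Adj x y → G.Adj (f x) (f y)

/-- The overlay `(H, f, ℓ)` of `G` is walk-preserving. -/
def WalkPres (H : SimpleGraph W) (G : SimpleGraph V) (f : W → V) (ℓ : W → ℕ) : Prop :=
  ∀ x : W, 1 ≤ ℓ x → ∀ w : V, G.Adj (f x) w →
    ∃ y : W, H.Adj x y ∧ f y = w ∧ ℓ x - 1 ≤ ℓ y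

/-- `(H, f, ℓ)` is an `r`-neighborhood overlay of `G`. -/
def IsRNbhd (r : ℕ) (H : SimpleGraph W) (G : SimpleGraph V) (f : W → V) (ℓ : W → ℕ) : Prop :=
  IsHomOn H G f ∧ WalkPres H G f ℓ ∧ (∀ x : W, ℓ x ≤ r) ∧ ∀ v : V, ∃ x : W, f x = v ∧ ℓ x = r

/-- `(Tr, β)` is a tree decomposition of `G`. -/
def IsTreeDecomp (G : SimpleGraph V) (Tr : SimpleGraph T) (β : T → Set V) : Prop :=
  Tr.IsTree ∧ (∀ ⦃u v : V⦄, G.Adj u v → ∃ t : T, u ∈ β t ∧ v ∈ β t) ∧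
    ∀ v : V, (Tr.induce {t : T | v ∈ β t}).Connected

/-- The treewidth of `G` is at most `t`. -/
def HasTwLE (G : SimpleGraph V) (t : ℝ) : Prop :=
  ∃ (T : Type) (Tr : SimpleGraph T) (β : T → Set V),
    IsTreeDecomp G Tr β ∧ ∀ s : T, ((β s).ncard : ℝ) ≤ t + 1

/-- An overlay of a (finite) graph `G`: a finite graph `H`, a homomorphism `f` from `H` to `G`,
and a function `ℓ` on the vertices of `H`. -/
structure Overlay (G : SimpleGraph V) : Type 1 where
  W : Type
  finW : Finite W
  H : SimpleGraph W
  f : W → V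
  hom : IsHomOn H G f
  ell : W → ℕ

/-- The thickness `θ_L(v)` of an overlay at a vertex `v`: the number of preimages of `v`. -/
noncomputable def Overlay.thick {G : SimpleGraph V} (L : Overlay G) (v : V) : ℕ :=
  Nat.card {x : L.W // L.f x = v}

/-- The overlay `L` is an `r`-neighborhood overlay. -/
def Overlay.IsRNbhdOv {G : SimpleGraph V} (L : Overlay G) (r : ℕ) : Prop :=
  IsRNbhd r L.H G L.f L.ell

/-- The thickness `θ_𝓛(v)` of a multiset of overlays at a vertex `v`. -/
noncomputable def mthick {G : SimpleGraph V} (𝓛 : Multiset (Overlay G)) (v : V) : ℝ :=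
  (𝓛.map fun L => (L.thick v : ℝ)).sum / (Multiset.card 𝓛)

end OverlayDefs

section WalkLifting

variable {V W : Type} {H : SimpleGraph W} {G : SimpleGraph V} {f : W → V}

theorem IsHomOn.exists_walk_length_eq (hom : IsHomOn H G f) {x y : W} (p : H.Walk x y) :
    ∃ q : G.Walk (f x) (f y), q.length = p.length :=
  ⟨p.map ⟨f, fun h => hom h⟩, p.length_map _⟩

theorem WalkPres.exists_lift {ℓ : W → ℕ} (wp : WalkPres H G f ℓ) {v u : V} (p : G.Walk v u)
    {x : W} (hx : f x = v) (hp : p.length ≤ ℓ x) :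
    ∃ z, f z = u ∧ ∃ q : H.Walk x z, q.length = p.length := by
  induction p generalizing x with
  | nil => exact ⟨x, hx, .nil, rfl⟩
  | @cons v w u hvw p ih =>
    subst hx
    rw [Walk.length_cons] at hp
    obtain ⟨x', hxx', hx', hℓ⟩ := wp x (by omega) w hvw
    obtain ⟨z, hz, q, hq⟩ := ih hx' (by omega)
    exact ⟨z, hz, q.cons hxx', by simp [hq]⟩

end WalkLifting

theorem stmt_1_general {VG VH : Type}
    (G : SimpleGraph VG) (H : SimpleGraph VH)
    (f : VH → VG) (hom : IsHomOn H G f) (ℓ : VH → ℕ)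
    (wp : WalkPres H G f ℓ)
    (x y : VH) (n : ℕ) (hn : n ≤ ℓ x)
    (huniq : ∀ z : VH, f z = f y → z = y) :
    (∃ W : G.Walk (f x) (f y), W.length = n) ↔ ∃ W : H.Walk x y, W.length = n := by
  constructor
  · rintro ⟨p, rfl⟩
    obtain ⟨z, hz, q, hq⟩ := wp.exists_lift p rfl hn
    obtain rfl := huniq z hz
    exact ⟨q, hq⟩
  · rintro ⟨p, rfl⟩
    exact hom.exists_walk_length_eq p

/-- For a walk-preserving overlay, if `n ≤ ℓ x` and `y` is the unique preimage of `f y`, then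
`G` has a walk of length `n` from `f x` to `f y` iff `H` has a walk of length `n` from `x` to
`y`. -/
theorem stmt_1 {VG VH : Type} [Fintype VG] [Fintype VH]
    (G : SimpleGraph VG) (H : SimpleGraph VH)
    (f : VH → VG) (hom : IsHomOn H G f) (ℓ : VH → ℕ)
    (wp : WalkPres H G f ℓ)
    (x y : VH) (n : ℕ) (hn : n ≤ ℓ x)
    (huniq : ∀ z : VH, f z = f y → z = y) :
    (∃ W : G.Walk (f x) (f y), W.length = n) ↔ ∃ W : H.Walk x y, W.length = n :=
  stmt_1_general G H f hom ℓ wp x y n hn huniq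
end

section
/- Let c be a nonnegative integer and let G be a graph on n vertices that admits a linear ordering of its vertices in which every vertex has at most c neighbors preceding it. Then every clique of G has at most c + 1 vertices, and the number of nonempty cliques of G is at most 2^c · n. -/
/-!
Order the vertices by `σ`. The `σ`-last vertex `v` of a nonempty clique `K` is adjacent to all
of `K \ {v}`, which therefore lies among the at most `c` neighbours preceding `v`. This bounds
`|K|` by `c + 1`, and since `K = insert v (K \ {v})`, at most `2 ^ c` cliques have last vertex `v`.
-/

open SimpleGraph

namespace SimpleGraph

variable {V α : Type*} [LinearOrder α] (G : SimpleGraph V) (σ : V → α)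

def backNeighborSet (v : V) : Set V := {u | G.Adj u v ∧ σ u < σ v}

variable {G σ}

theorem IsClique.exists_sdiff_singleton_subset_backNeighborSet (hσ : Function.Injective σ)
    {K : Set V} (hK : G.IsClique K) (hfin : K.Finite) (hne : K.Nonempty) :
    ∃ v ∈ K, K \ {v} ⊆ G.backNeighborSet σ v := by
  obtain ⟨v, hv, hmax⟩ := K.exists_max_image σ hfin hne
  refine ⟨v, hv, ?_⟩
  rintro u ⟨hu, huv⟩
  exact ⟨hK hu hv huv, (hmax u hu).lt_of_ne (hσ.ne huv)⟩

theorem IsClique.ncard_le_succ [Finite V] (hσ : Function.Injective σ) {c : ℕ}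
    (hdeg : ∀ v, (G.backNeighborSet σ v).ncard ≤ c) {K : Set V} (hK : G.IsClique K) :
    K.ncard ≤ c + 1 := by
  rcases K.eq_empty_or_nonempty with rfl | hne
  · simp
  obtain ⟨v, hv, hsub⟩ := hK.exists_sdiff_singleton_subset_backNeighborSet hσ K.toFinite hne
  rw [← Set.ncard_sdiff_singleton_add_one hv]
  grw [Set.ncard_le_ncard hsub, hdeg v]

theorem ncard_nonempty_cliques_le_sum [Fintype V] (hσ : Function.Injective σ) :
    {K : Set V | G.IsClique K ∧ K.Nonempty}.ncard ≤
      ∑ v, 2 ^ (G.backNeighborSet σ v).ncard := by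
  have hcover : {K : Set V | G.IsClique K ∧ K.Nonempty} ⊆
      ⋃ v ∈ Finset.univ, insert v '' 𝒫 G.backNeighborSet σ v := by
    rintro K ⟨hK, hne⟩
    obtain ⟨v, hv, hsub⟩ := hK.exists_sdiff_singleton_subset_backNeighborSet hσ K.toFinite hne
    refine Set.mem_biUnion (Finset.mem_univ v) ⟨K \ {v}, hsub, ?_⟩
    rw [Set.insert_sdiff_singleton, Set.insert_eq_of_mem hv]
  calc _ ≤ (⋃ v ∈ Finset.univ, insert v '' 𝒫 G.backNeighborSet σ v).ncard :=
        Set.ncard_le_ncard hcover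
    _ ≤ ∑ v, (insert v '' 𝒫 G.backNeighborSet σ v).ncard := Finset.set_ncard_biUnion_le _ _
    _ ≤ ∑ v, (𝒫 G.backNeighborSet σ v).ncard :=
        Finset.sum_le_sum fun v _ => Set.ncard_image_le (𝒫 G.backNeighborSet σ v).toFinite
    _ = ∑ v, 2 ^ (G.backNeighborSet σ v).ncard :=
        Finset.sum_congr rfl fun v _ => Set.ncard_powerset _

end SimpleGraph

/-- If `G` admits a linear ordering (encoded by an injection `σ` into `ℕ`) in which every
vertex has at most `c` preceding neighbors, then all cliques have at most `c + 1` vertices and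
there are at most `2 ^ c * |V(G)|` nonempty cliques. -/
theorem stmt_4 {V : Type} [Fintype V] (G : SimpleGraph V) (c : ℕ)
    (σ : V → ℕ) (hσ : Function.Injective σ)
    (hdeg : ∀ v : V, {u : V | G.Adj u v ∧ σ u < σ v}.ncard ≤ c) :
    (∀ K : Set V, G.IsClique K → K.ncard ≤ c + 1) ∧
    {K : Set V | G.IsClique K ∧ K.Nonempty}.ncard ≤ 2 ^ c * Fintype.card V := by
  refine ⟨fun K hK => hK.ncard_le_succ hσ hdeg, ?_⟩
  calc _ ≤ ∑ v, 2 ^ (G.backNeighborSet σ v).ncard := G.ncard_nonempty_cliques_le_sum hσ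
    _ ≤ ∑ _v : V, 2 ^ c :=
        Finset.sum_le_sum fun v _ => Nat.pow_le_pow_right two_pos (hdeg v)
    _ = 2 ^ c * Fintype.card V := by rw [Finset.sum_const, Finset.card_univ, smul_eq_mul, mul_comm]
end

section
/- Let G be a graph, let s ≥ 0 and k ≥ 1 be integers, and let π be a property of subsets of V(G) that is s-near-monotone, i.e., for every X ⊆ V(G) with π(X) and every Y ⊆ X there exists Z ⊆ Y with π(Z) and |Z| ≥ |Y| − s·|X ∖ Y|. Let 𝓛 be a nonempty finite multiset of overlays of G such that θ_L(v) ≥ 1 for every L ∈ 𝓛 and v ∈ V(G), and θ_𝓛(v) ≤ 1 + 1/k for every v ∈ V(G). For L ∈ 𝓛 set S_L = {v ∈ V(G) : θ_L(v) = 1}. Then for every X₀ ⊆ V(G) with π(X₀) there exist L ∈ 𝓛 and Z ⊆ X₀ ∩ S_L such that π(Z) holds and k · |Z| ≥ (k − s − 1) · |X₀|. -/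
open SimpleGraph

open Finset

/-! Averaging: summed over `𝓛` and over `v ∈ X₀`, the excess thickness `θ_L(v) - 1` is at most
`|𝓛| · |X₀| / k`, so some `L ∈ 𝓛` has at most `|X₀| / k` vertices of `X₀` outside `S_L`. Deleting
these from `X₀` and applying near-monotonicity loses at most `(s + 1) · |X₀| / k` vertices. -/

theorem Multiset.exists_le_of_sum_map_le {ι M : Type*} [AddCommMonoid M] [LinearOrder M]
    [IsOrderedCancelAddMonoid M] {m : Multiset ι} (hm : m ≠ 0) {f g : ι → M}
    (h : (m.map f).sum ≤ (m.map g).sum) : ∃ i ∈ m, f i ≤ g i := by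
  contrapose! h
  exact Multiset.sum_lt_sum_of_nonempty hm h

theorem Finset.card_add_card_filter_ne_one_le_sum {ι : Type*} (X : Finset ι) {f : ι → ℕ}
    (hf : ∀ i ∈ X, 1 ≤ f i) : #X + #{i ∈ X | f i ≠ 1} ≤ ∑ i ∈ X, f i := by
  rw [card_eq_sum_ones, card_filter, ← sum_add_distrib]
  refine sum_le_sum fun i hi => ?_
  have := hf i hi
  split_ifs <;> omega

section Overlay

variable {V : Type} {G : SimpleGraph V}

theorem sum_thick_eq_mthick_mul (𝓛 : Multiset (Overlay G)) (v : V) :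
    (𝓛.map fun L => (L.thick v : ℝ)).sum = mthick 𝓛 v * Multiset.card 𝓛 := by
  rcases eq_or_ne 𝓛 0 with rfl | h𝓛
  · simp
  · exact (div_mul_cancel₀ _ (by simpa using h𝓛)).symm

theorem mul_sum_thick_le {k : ℕ} {𝓛 : Multiset (Overlay G)} {v : V}
    (hth : mthick 𝓛 v ≤ 1 + 1 / (k : ℝ)) :
    (k : ℝ) * (𝓛.map fun L => (L.thick v : ℝ)).sum ≤ (k + 1) * Multiset.card 𝓛 := by
  rw [sum_thick_eq_mthick_mul, ← mul_assoc]
  gcongr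
  calc (k : ℝ) * mthick 𝓛 v ≤ k * (1 + 1 / k) := by gcongr
    _ = k + k / k := by ring
    _ ≤ k + 1 := by grw [div_self_le_one]

theorem exists_mem_mul_card_filter_thick_ne_one_le {k : ℕ} {𝓛 : Multiset (Overlay G)}
    (h0 : 𝓛 ≠ 0) (h1 : ∀ L ∈ 𝓛, ∀ v, 1 ≤ L.thick v)
    (hth : ∀ v, mthick 𝓛 v ≤ 1 + 1 / (k : ℝ)) (X : Finset V) :
    ∃ L ∈ 𝓛, k * #{v ∈ X | L.thick v ≠ 1} ≤ #X := by
  have hsum : (𝓛.map fun L => (k : ℝ) * ∑ v ∈ X, (L.thick v : ℝ)).sum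
      ≤ (𝓛.map fun _ => ((k : ℝ) + 1) * #X).sum := by
    rw [Multiset.sum_map_mul_left, Multiset.sum_map_sum, Multiset.map_const',
      Multiset.sum_replicate, nsmul_eq_mul, mul_sum]
    calc ∑ v ∈ X, (k : ℝ) * (𝓛.map fun L => (L.thick v : ℝ)).sum
        ≤ ∑ _v ∈ X, ((k : ℝ) + 1) * Multiset.card 𝓛 :=
          sum_le_sum fun v _ => mul_sum_thick_le (hth v)
      _ = _ := by rw [sum_const, nsmul_eq_mul]; ring
  obtain ⟨L, hL, hle⟩ := Multiset.exists_le_of_sum_map_le h0 hsum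
  refine ⟨L, hL, ?_⟩
  set d := #{v ∈ X | L.thick v ≠ 1}
  have hcard : ((#X + d : ℕ) : ℝ) ≤ ∑ v ∈ X, (L.thick v : ℝ) := by
    exact_mod_cast X.card_add_card_filter_ne_one_le_sum fun v _ => h1 L hL v
  have : (k : ℝ) * (#X + d) ≤ (k + 1) * #X := le_trans (by gcongr; exact_mod_cast hcard) hle
  exact_mod_cast (by linarith : (k : ℝ) * d ≤ #X)

end Overlay

theorem stmt_7_general {V : Type} [Fintype V] (G : SimpleGraph V)
    (s k : ℕ) (π : Set V → Prop)
    (hmono : ∀ X : Set V, π X → ∀ Y ⊆ X,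
      ∃ Z ⊆ Y, π Z ∧ Y.ncard ≤ Z.ncard + s * (X \ Y).ncard)
    (𝓛 : Multiset (Overlay G)) (h0 : 𝓛 ≠ 0)
    (h1 : ∀ L ∈ 𝓛, ∀ v : V, 1 ≤ L.thick v)
    (hth : ∀ v : V, mthick 𝓛 v ≤ 1 + 1 / (k : ℝ)) :
    ∀ X₀ : Set V, π X₀ →
      ∃ L ∈ 𝓛, ∃ Z ⊆ X₀ ∩ {v : V | L.thick v = 1}, π Z ∧
        ((k : ℤ) - s - 1) * X₀.ncard ≤ (k : ℤ) * Z.ncard := by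
  classical
  intro X₀ hX₀
  obtain ⟨L, hL, hkd⟩ := exists_mem_mul_card_filter_thick_ne_one_le h0 h1 hth X₀.toFinset
  set S := {v : V | L.thick v = 1}
  obtain ⟨Z, hZ, hπZ, hYZ⟩ := hmono X₀ hX₀ (X₀ ∩ S) Set.inter_subset_left
  refine ⟨L, hL, Z, hZ, hπZ, ?_⟩
  have hsplit : (X₀ \ S).ncard + (X₀ ∩ S).ncard = X₀.ncard := by
    rw [← Set.sdiff_self_inter]
    exact Set.ncard_sdiff_add_ncard_of_subset Set.inter_subset_left X₀.toFinite
  have hdefect : #{v ∈ X₀.toFinset | L.thick v ≠ 1} = (X₀ \ S).ncard := by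
    rw [Set.ncard_eq_toFinset_card']
    congr 1
    ext v
    simp [S]
  rw [Set.sdiff_self_inter] at hYZ
  rw [hdefect, ← Set.ncard_eq_toFinset_card'] at hkd
  zify at hsplit hYZ hkd
  nlinarith [mul_le_mul_of_nonneg_left hYZ (Nat.cast_nonneg (α := ℤ) k),
    mul_le_mul_of_nonneg_left hkd (by positivity : (0 : ℤ) ≤ s + 1)]

/-- Core of Theorem 5 (thm-indep): for an `s`-near-monotone property `π` and a system of
overlays of thickness at most `1 + 1/k` with all members of thickness at least 1 everywhere,
every `X₀` with `π(X₀)` admits an overlay `L` and a subset `Z` of `X₀ ∩ S_L` with `π(Z)` and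
`k·|Z| ≥ (k − s − 1)·|X₀|`. -/
theorem stmt_7 {V : Type} [Fintype V] (G : SimpleGraph V)
    (s k : ℕ) (hk : 1 ≤ k) (π : Set V → Prop)
    (hmono : ∀ X : Set V, π X → ∀ Y ⊆ X,
      ∃ Z ⊆ Y, π Z ∧ Y.ncard ≤ Z.ncard + s * (X \ Y).ncard)
    (𝓛 : Multiset (Overlay G)) (h0 : 𝓛 ≠ 0)
    (h1 : ∀ L ∈ 𝓛, ∀ v : V, 1 ≤ L.thick v)
    (hth : ∀ v : V, mthick 𝓛 v ≤ 1 + 1 / (k : ℝ)) :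
    ∀ X₀ : Set V, π X₀ →
      ∃ L ∈ 𝓛, ∃ Z ⊆ X₀ ∩ {v : V | L.thick v = 1}, π Z ∧
        ((k : ℤ) - s - 1) * X₀.ncard ≤ (k : ℤ) * Z.ncard :=
  stmt_7_general G s k π hmono 𝓛 h0 h1 hth
end

section
/- Let r and t be positive integers and let L = (H, f, ℓ) be a subgraph-based r-neighborhood overlay of a graph G with tw(H) ≤ t. Then for every vertex v of G, the subgraph of G induced by the set of vertices at distance at most r from v has treewidth at most t. -/
open SimpleGraph

/-- The overlay `(H, f, ℓ)` of `G` is subgraph-based: `f` is injective on each connected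
component of `H` and maps each component onto an induced subgraph of `G`. -/
def SubgraphBased {VG VH : Type} (G : SimpleGraph VG) (H : SimpleGraph VH)
    (f : VH → VG) : Prop :=
  (∀ x y : VH, H.Reachable x y → f x = f y → x = y) ∧
  (∀ x y : VH, H.Reachable x y → G.Adj (f x) (f y) → H.Adj x y)

/-!
Fix `x` over `v` with `ℓ x = r`. Walk-preservation lifts every walk of length at most `r`
starting at `v` to a walk in `H` starting at `x`, so each vertex of the `r`-ball has a preimage
in the component of `x`. Since the overlay is subgraph-based, `f` restricted to that component
is injective and reflects adjacency, so choosing these preimages embeds the ball into `H`;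
restricting the bags of a tree decomposition of `H` along this embedding gives one of the ball.
-/

theorem HasTwLE.of_injective_hom {V W : Type} [Finite W] {G : SimpleGraph V}
    {H : SimpleGraph W} {t : ℝ} (htw : HasTwLE H t) (φ : G →g H)
    (hφ : Function.Injective φ) : HasTwLE G t := by
  obtain ⟨T, Tr, β, ⟨htree, hedge, hconn⟩, hsize⟩ := htw
  refine ⟨T, Tr, fun s => φ ⁻¹' β s,
    ⟨htree, fun a b hab => hedge (φ.map_adj hab), fun a => hconn (φ a)⟩, fun s => ?_⟩
  have hcard : (φ ⁻¹' β s).ncard ≤ (β s).ncard := by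
    rw [← Set.ncard_image_of_injective _ hφ]
    exact Set.ncard_le_ncard (Set.image_preimage_subset φ (β s)) (Set.toFinite _)
  calc ((φ ⁻¹' β s).ncard : ℝ) ≤ (β s).ncard := by exact_mod_cast hcard
    _ ≤ t + 1 := hsize s

theorem WalkPres.exists_reachable_lift {V W : Type} {H : SimpleGraph W} {G : SimpleGraph V}
    {f : W → V} {ℓ : W → ℕ} (hwp : WalkPres H G f ℓ) {b c : V} (p : G.Walk b c) {y : W}
    (hy : f y = b) (hlen : p.length ≤ ℓ y) : ∃ z, H.Reachable y z ∧ f z = c := by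
  induction p generalizing y with
  | nil => exact ⟨y, Reachable.refl y, hy⟩
  | cons hadj p ih =>
    rw [Walk.length_cons] at hlen
    obtain ⟨y', hyy', hfy', hℓ⟩ := hwp y (by omega) _ (hy ▸ hadj)
    obtain ⟨z, hy'z, hfz⟩ := ih hfy' (by omega)
    exact ⟨z, hyy'.reachable.trans hy'z, hfz⟩

theorem SubgraphBased.exists_injective_hom_induce {V W : Type} {G : SimpleGraph V}
    {H : SimpleGraph W} {f : W → V} (hsb : SubgraphBased G H f) {x : W} {S : Set V}
    (hlift : ∀ u ∈ S, ∃ z, H.Reachable x z ∧ f z = u) :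
    ∃ φ : G.induce S →g H, Function.Injective φ := by
  choose g hxg hfg using fun u : S => hlift u u.2
  refine ⟨⟨g, fun {a b} hab => hsb.2 _ _ ((hxg a).symm.trans (hxg b)) ?_⟩, fun a b hab => ?_⟩
  · rwa [hfg a, hfg b]
  · exact Subtype.ext (by rw [← hfg a, ← hfg b]; exact congrArg f hab)

theorem stmt_10_general {VG VH : Type} [Fintype VH]
    (r t : ℕ)
    (G : SimpleGraph VG) (H : SimpleGraph VH) (f : VH → VG) (ℓ : VH → ℕ)
    (hov : IsRNbhd r H G f ℓ)
    (hsb : SubgraphBased G H f)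
    (htw : HasTwLE H t) :
    ∀ v : VG, HasTwLE (G.induce {u : VG | ∃ W : G.Walk v u, W.length ≤ r}) t := by
  intro v
  obtain ⟨-, hwp, -, hcover⟩ := hov
  obtain ⟨x, hfx, hℓx⟩ := hcover v
  have hlift : ∀ u ∈ {u : VG | ∃ W : G.Walk v u, W.length ≤ r},
      ∃ z, H.Reachable x z ∧ f z = u := by
    rintro u ⟨p, hp⟩
    exact hwp.exists_reachable_lift p hfx (hℓx ▸ hp)
  obtain ⟨φ, hφ⟩ := hsb.exists_injective_hom_induce hlift
  exact htw.of_injective_hom φ hφ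

/-- Lemma 10 (lemma-localtw, core): if `G` has a subgraph-based `r`-neighborhood overlay of
treewidth at most `t`, then each ball of radius `r` in `G` induces a subgraph of treewidth at
most `t`. -/
theorem stmt_10 {VG VH : Type} [Fintype VG] [Fintype VH]
    (r t : ℕ) (hr : 0 < r) (ht : 0 < t)
    (G : SimpleGraph VG) (H : SimpleGraph VH) (f : VH → VG) (ℓ : VH → ℕ)
    (hov : IsRNbhd r H G f ℓ)
    (hsb : SubgraphBased G H f)
    (htw : HasTwLE H t) :
    ∀ v : VG, HasTwLE (G.induce {u : VG | ∃ W : G.Walk v u, W.length ≤ r}) t :=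
  stmt_10_general r t G H f ℓ hov hsb htw
end

section
/- Let G be a graph, let k be a positive integer, and let 𝓛' be a nonempty finite multiset of overlays of G with θ_{𝓛'}(v) ≤ 1 + 1/(3k) for every v ∈ V(G). Let b = |𝓛'| and let a ≥ b be an integer. Then there exist a positive integer c and a finite multiset 𝓛 of overlays of G, whose underlying set of elements is that of 𝓛' and in which each element of 𝓛' occurs either c or c + 1 times, such that |𝓛| = 3ka and θ_𝓛(v) < 1 + 1/k for every v ∈ V(G). -/
/-!
Put `b = |𝓛'|` and `c = ⌊3ka / b⌋ ≥ 3k`, and give each element of `𝓛'` weight `c` or `c + 1`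
so that the weights add up to `3ka`; `𝓛` repeats every element according to its weight. The
thickness sum of `𝓛` at `v` is at most `(c + 1)` times that of `𝓛'`, hence at most
`(c + 1) b (1 + 1/(3k))`, while `|𝓛| ≥ c b`. Finally `(c + 1)(1 + 1/(3k)) < c (1 + 1/k)` amounts to
`3k + 1 < 2c`, which holds since `c ≥ 3k`.
-/

open SimpleGraph

def blowUp {α : Type*} (P : Multiset (α × ℕ)) : Multiset α :=
  P.bind fun p => Multiset.replicate p.2 p.1

section BlowUp

variable {α : Type*} (P : Multiset (α × ℕ))

theorem card_blowUp : Multiset.card (blowUp P) = (P.map Prod.snd).sum := by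
  simp [blowUp, Multiset.card_bind]

variable {P}

theorem mem_blowUp_iff (hP : ∀ p ∈ P, 0 < p.2) {a : α} : a ∈ blowUp P ↔ a ∈ P.map Prod.fst := by
  simp only [blowUp, Multiset.mem_bind, Multiset.mem_replicate, Multiset.mem_map]
  constructor
  · rintro ⟨p, hp, -, rfl⟩
    exact ⟨p, hp, rfl⟩
  · rintro ⟨p, hp, rfl⟩
    exact ⟨p, hp, (hP p hp).ne', rfl⟩

theorem sum_map_blowUp {R : Type*} [Semiring R] (f : α → R) :
    ((blowUp P).map f).sum = (P.map fun p => (p.2 : R) * f p.1).sum := by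
  simp only [blowUp, Multiset.map_bind, Multiset.sum_bind, Multiset.map_replicate,
    Multiset.sum_replicate, nsmul_eq_mul]

theorem sum_map_blowUp_le {R : Type*} [CommSemiring R] [PartialOrder R] [IsOrderedRing R]
    {f : α → R} (hf : ∀ a, 0 ≤ f a) {m : ℕ} (hP : ∀ p ∈ P, p.2 ≤ m) :
    ((blowUp P).map f).sum ≤ m * ((P.map Prod.fst).map f).sum := by
  rw [sum_map_blowUp, Multiset.map_map, ← Multiset.sum_map_mul_left]
  exact Multiset.sum_map_le_sum_map _ _ fun p hp =>
    mul_le_mul_of_nonneg_right (Nat.mono_cast (hP p hp)) (hf p.1)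

end BlowUp

theorem Multiset.exists_weights_div_or_div_add_one {α : Type*} (s : Multiset α) (hs : s ≠ 0)
    (N : ℕ) : ∃ P : Multiset (α × ℕ), P.map Prod.fst = s ∧
      (∀ p ∈ P, p.2 = N / card s ∨ p.2 = N / card s + 1) ∧ (P.map Prod.snd).sum = N := by
  set b := card s
  set c := N / b
  set r := N % b
  have hrb : r < b := Nat.mod_lt _ (card_pos.mpr hs)
  set weights := List.replicate r (c + 1) ++ List.replicate (b - r) c
  have hlen : s.toList.length = weights.length := by
    simp [weights, b]; omega
  refine ⟨s.toList.zip weights, ?_, ?_, ?_⟩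
  · rw [map_coe, List.map_fst_zip hlen.le, coe_toList]
  · rintro ⟨x, w⟩ hp
    rcases List.mem_append.mp (List.of_mem_zip (mem_coe.mp hp)).2 with h | h
    · exact Or.inr (List.eq_of_mem_replicate h)
    · exact Or.inl (List.eq_of_mem_replicate h)
  · rw [map_coe, List.map_snd_zip hlen.ge, sum_coe]
    simp only [weights, List.sum_append, List.sum_replicate, smul_eq_mul]
    have : b * c + r = N := Nat.div_add_mod N b
    have : r * c ≤ b * c := Nat.mul_le_mul_right _ hrb.le
    rw [Nat.mul_succ, Nat.sub_mul]
    omega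

theorem add_one_mul_one_add_inv_lt {k c : ℝ} (hk : 1 ≤ k) (hc : 3 * k ≤ c) :
    (c + 1) * (1 + 1 / (3 * k)) < (1 + 1 / k) * c := by
  have hk0 : 0 < k := by linarith
  field_simp
  nlinarith

theorem mthick_blowUp_lt {V : Type} {G : SimpleGraph V} {k c : ℕ} (hk : 0 < k) (hc : 3 * k ≤ c)
    {P : Multiset (Overlay G × ℕ)} (h0 : P ≠ 0) (hw : ∀ p ∈ P, p.2 = c ∨ p.2 = c + 1) {v : V}
    (hv : mthick (P.map Prod.fst) v ≤ 1 + 1 / (3 * (k : ℝ))) :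
    mthick (blowUp P) v < 1 + 1 / (k : ℝ) := by
  have hcard : Multiset.card P * c ≤ Multiset.card (blowUp P) := by
    rw [card_blowUp, ← Multiset.card_map Prod.snd P]
    exact Multiset.card_nsmul_le_sum fun w hw' => by
      obtain ⟨p, hp, rfl⟩ := Multiset.mem_map.mp hw'
      rcases hw p hp with h | h <;> omega
  set b := Multiset.card P
  set N := Multiset.card (blowUp P)
  set S := ((P.map Prod.fst).map fun L => (L.thick v : ℝ)).sum
  have hb : (0 : ℝ) < b := by exact_mod_cast Multiset.card_pos.mpr h0
  have hk1 : (1 : ℝ) ≤ k := by exact_mod_cast hk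
  have hc' : 3 * (k : ℝ) ≤ c := by exact_mod_cast hc
  have hcb : (c : ℝ) * b ≤ N := by rw [mul_comm]; exact_mod_cast hcard
  have hN : (0 : ℝ) < N := lt_of_lt_of_le (mul_pos (by linarith) hb) hcb
  have hS : S ≤ b * (1 + 1 / (3 * (k : ℝ))) := by
    rw [mthick, Multiset.card_map, div_le_iff₀ hb] at hv
    linarith
  rw [mthick, div_lt_iff₀ hN]
  calc ((blowUp P).map fun L => (L.thick v : ℝ)).sum
      ≤ ((c + 1 : ℕ) : ℝ) * S :=
        sum_map_blowUp_le (fun L => Nat.cast_nonneg _) fun p hp => by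
          rcases hw p hp with h | h <;> omega
    _ ≤ (c + 1) * (b * (1 + 1 / (3 * (k : ℝ)))) := by push_cast; gcongr
    _ = (c + 1) * (1 + 1 / (3 * (k : ℝ))) * b := by ring
    _ < (1 + 1 / (k : ℝ)) * c * b :=
        mul_lt_mul_of_pos_right (add_one_mul_one_add_inv_lt hk1 hc') hb
    _ ≤ (1 + 1 / (k : ℝ)) * N := by rw [mul_assoc]; gcongr

theorem stmt_11_general {V : Type} (G : SimpleGraph V) (k : ℕ) (hk : 0 < k)
    (𝓛' : Multiset (Overlay G)) (h0 : 𝓛' ≠ 0)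
    (hth : ∀ v : V, mthick 𝓛' v ≤ 1 + 1 / (3 * (k : ℝ)))
    (a : ℕ) (ha : Multiset.card 𝓛' ≤ a) :
    ∃ (c : ℕ) (𝓟 : Multiset (Overlay G × ℕ)), 0 < c ∧
      𝓟.map Prod.fst = 𝓛' ∧
      (∀ p ∈ 𝓟, p.2 = c ∨ p.2 = c + 1) ∧
      ((∀ L : Overlay G,
          L ∈ 𝓟.bind (fun p => Multiset.replicate p.2 p.1) ↔ L ∈ 𝓛') ∧
        Multiset.card (𝓟.bind fun p => Multiset.replicate p.2 p.1) = 3 * k * a ∧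
        ∀ v : V, mthick (𝓟.bind fun p => Multiset.replicate p.2 p.1) v < 1 + 1 / (k : ℝ)) := by
  obtain ⟨P, hP, hw, hsum⟩ := 𝓛'.exists_weights_div_or_div_add_one h0 (3 * k * a)
  have hc : 3 * k ≤ 3 * k * a / Multiset.card 𝓛' :=
    (Nat.le_div_iff_mul_le (Multiset.card_pos.mpr h0)).mpr (Nat.mul_le_mul_left _ ha)
  have hP0 : P ≠ 0 := fun h => h0 (by rw [← hP, h, Multiset.map_zero])
  refine ⟨_, P, by omega, hP, hw, fun L => ?_, (card_blowUp P).trans hsum, fun v => ?_⟩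
  · rw [← hP]
    exact mem_blowUp_iff fun p hp => by rcases hw p hp with h | h <;> omega
  · exact mthick_blowUp_lt hk hc hP0 hw (hP ▸ hth v)

/-- Lemma 12 (lemma-samesize, core step): a system `𝓛'` of overlays of thickness at most
`1 + 1/(3k)` and size `b` can be blown up, replicating each of its elements either `c` or
`c + 1` times, into a system `𝓛` of size exactly `3·k·a` (for any `a ≥ b`), with the same
underlying set of elements and thickness less than `1 + 1/k`. -/
theorem stmt_11 {V : Type} [Fintype V] (G : SimpleGraph V) (k : ℕ) (hk : 0 < k)
    (𝓛' : Multiset (Overlay G)) (h0 : 𝓛' ≠ 0)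
    (hth : ∀ v : V, mthick 𝓛' v ≤ 1 + 1 / (3 * (k : ℝ)))
    (a : ℕ) (ha : Multiset.card 𝓛' ≤ a) :
    ∃ (c : ℕ) (𝓟 : Multiset (Overlay G × ℕ)), 0 < c ∧
      𝓟.map Prod.fst = 𝓛' ∧
      (∀ p ∈ 𝓟, p.2 = c ∨ p.2 = c + 1) ∧
      ((∀ L : Overlay G,
          L ∈ 𝓟.bind (fun p => Multiset.replicate p.2 p.1) ↔ L ∈ 𝓛') ∧
        Multiset.card (𝓟.bind fun p => Multiset.replicate p.2 p.1) = 3 * k * a ∧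
        ∀ v : V, mthick (𝓟.bind fun p => Multiset.replicate p.2 p.1) v < 1 + 1 / (k : ℝ)) :=
  stmt_11_general G k hk 𝓛' h0 hth a ha
end

section
/- Let r, k, t, a be positive integers, let G be a graph, and let A ⊆ V(G) with |A| = a. Suppose there exists a nonempty finite multiset 𝓛'' of r-neighborhood overlays of G − A (the subgraph of G induced by V(G) ∖ A) of size N such that θ_{𝓛''}(v) ≤ 1 + 1/k for every v ∈ V(G) ∖ A and every member (H, f, ℓ) of 𝓛'' satisfies tw(H) ≤ t. Then there exists a nonempty finite multiset 𝓛 of r-neighborhood overlays of G of size N such that θ_𝓛(v) = 1 for every v ∈ A, θ_𝓛(v) ≤ 1 + 1/k for every v ∈ V(G) ∖ A, and every member (H, f, ℓ) of 𝓛 satisfies tw(H) ≤ t + a. -/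
open SimpleGraph

/-!
Add the apex set `A` to every overlay of `G − A`: take one copy of each apex vertex, at level
`r`, adjacent to all lifts of its neighbours. Walk-preservation survives because an apex copy
sits at the top level and every vertex of `G − A` has a lift at level `r`; the thickness on `A`
becomes exactly `1` and is unchanged elsewhere; and adding `A` to every bag of a tree
decomposition of `H` gives one of the extended graph, of width at most `t + |A|`.
-/

section TreeDecomp

variable {W U T : Type} {H : SimpleGraph W} {H' : SimpleGraph (W ⊕ U)}

theorem IsTreeDecomp.sum_inr {Tr : SimpleGraph T} {β : T → Set W}
    (hβ : IsTreeDecomp H Tr β) (hH' : H'.comap Sum.inl ≤ H) :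
    IsTreeDecomp H' Tr fun s => Sum.inl '' β s ∪ Set.range Sum.inr := by
  obtain ⟨htree, hcover, hconn⟩ := hβ
  have hT : Nonempty T := htree.connected.nonempty
  have hmem : ∀ x, ∃ s, x ∈ β s := fun x => (hconn x).nonempty.elim fun s => ⟨s, s.2⟩
  refine ⟨htree, ?_, ?_⟩
  · rintro (x | u) (y | w) h
    · obtain ⟨s, hx, hy⟩ := hcover (hH' h)
      exact ⟨s, .inl ⟨x, hx, rfl⟩, .inl ⟨y, hy, rfl⟩⟩
    · obtain ⟨s, hx⟩ := hmem x
      exact ⟨s, .inl ⟨x, hx, rfl⟩, .inr ⟨w, rfl⟩⟩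
    · obtain ⟨s, hy⟩ := hmem y
      exact ⟨s, .inr ⟨u, rfl⟩, .inl ⟨y, hy, rfl⟩⟩
    · exact ⟨Classical.arbitrary T, .inr ⟨u, rfl⟩, .inr ⟨w, rfl⟩⟩
  · rintro (x | u)
    · rw [show {s | .inl x ∈ Sum.inl '' β s ∪ Set.range Sum.inr} = {s | x ∈ β s} by ext; simp]
      exact hconn x
    · rw [show {s | .inr u ∈ Sum.inl '' β s ∪ Set.range Sum.inr} = Set.univ by ext; simp]
      exact (induceUnivIso Tr).connected_iff.mpr htree.connected

theorem HasTwLE.sum_inr [Finite U] {t : ℝ} (hH : HasTwLE H t) (hH' : H'.comap Sum.inl ≤ H) :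
    HasTwLE H' (t + Nat.card U) := by
  obtain ⟨T, Tr, β, hβ, hbags⟩ := hH
  refine ⟨T, Tr, _, hβ.sum_inr hH', fun s => ?_⟩
  have hcard : (Sum.inl '' β s ∪ Set.range (Sum.inr : U → W ⊕ U)).ncard ≤
      (β s).ncard + Nat.card U := by
    calc _ ≤ (Sum.inl '' β s).ncard + (Set.range (Sum.inr : U → W ⊕ U)).ncard :=
          Set.ncard_union_le _ _
      _ = (β s).ncard + Nat.card U := by
          rw [Set.ncard_image_of_injective _ Sum.inl_injective,
            Set.ncard_range_of_injective Sum.inr_injective]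
  calc _ ≤ ((β s).ncard : ℝ) + Nat.card U := by exact_mod_cast hcard
    _ ≤ t + Nat.card U + 1 := by linarith [hbags s]

end TreeDecomp

theorem Nat.card_fiber_sumElim {α β V : Type*} [Finite α] [Finite β] (f : α → V) (g : β → V)
    (v : V) :
    Nat.card {x // Sum.elim f g x = v} = Nat.card {a // f a = v} + Nat.card {b // g b = v} :=
  (Nat.card_congr Equiv.subtypeSum).trans Nat.card_sum

section Mthick

variable {V V' : Type} {G : SimpleGraph V} {G' : SimpleGraph V'}

theorem mthick_map_of_thick_eq (𝓛 : Multiset (Overlay G')) (F : Overlay G' → Overlay G)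
    {v : V} {v' : V'} (h : ∀ L ∈ 𝓛, (F L).thick v = L.thick v') :
    mthick (𝓛.map F) v = mthick 𝓛 v' := by
  rw [mthick, mthick, Multiset.map_map, Multiset.card_map]
  congr 2
  exact Multiset.map_congr rfl fun L hL => congrArg Nat.cast (h L hL)

theorem mthick_eq_one_of_thick_eq_one {𝓛 : Multiset (Overlay G)} (h0 : 𝓛 ≠ 0) {v : V}
    (h : ∀ L ∈ 𝓛, L.thick v = 1) : mthick 𝓛 v = 1 := by
  have hcard : (Multiset.card 𝓛 : ℝ) ≠ 0 := by simpa using h0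
  rw [mthick, Multiset.map_congr rfl fun L hL => congrArg Nat.cast (h L hL),
    Multiset.map_const', Multiset.sum_replicate, nsmul_eq_mul, Nat.cast_one, mul_one,
    div_self hcard]

end Mthick

namespace Overlay

variable {V : Type} {G : SimpleGraph V} {A : Set V}

def apexMap (L : Overlay (G.induce Aᶜ)) : L.W ⊕ A → V :=
  Sum.elim (fun x => L.f x) Subtype.val

def apexGraph (L : Overlay (G.induce Aᶜ)) : SimpleGraph (L.W ⊕ A) where
  Adj x y := match x, y with
    | .inl x, .inl y => L.H.Adj x y
    | x, y => G.Adj (L.apexMap x) (L.apexMap y)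
  symm := ⟨by rintro (x | u) (y | v) h <;> exact h.symm⟩
  loopless := ⟨by rintro (x | u) h <;> exact h.ne rfl⟩

theorem isHomOn_apexMap (L : Overlay (G.induce Aᶜ)) : IsHomOn L.apexGraph G L.apexMap := by
  rintro (x | u) (y | w) h
  · exact L.hom h
  all_goals exact h

theorem comap_inl_apexGraph (L : Overlay (G.induce Aᶜ)) : L.apexGraph.comap Sum.inl = L.H := by
  ext x y
  rfl

variable [Finite A]

def addApex (r : ℕ) (L : Overlay (G.induce Aᶜ)) : Overlay G where
  W := L.W ⊕ A
  finW := have := L.finW; inferInstance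
  H := L.apexGraph
  f := L.apexMap
  hom := L.isHomOn_apexMap
  ell := Sum.elim L.ell fun _ => r

theorem IsRNbhdOv.addApex {r : ℕ} {L : Overlay (G.induce Aᶜ)} (hL : L.IsRNbhdOv r) :
    (L.addApex r).IsRNbhdOv r := by
  obtain ⟨-, hwalk, hle, htop⟩ := hL
  have hlift : ∀ w ∉ A, ∃ x, (L.f x : V) = w ∧ L.ell x = r := fun w hw =>
    (htop ⟨w, hw⟩).imp fun x hx => ⟨congrArg Subtype.val hx.1, hx.2⟩
  refine ⟨L.isHomOn_apexMap, ?_, ?_, ?_⟩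
  · rintro (x | u) hx w hadj <;> by_cases hw : w ∈ A
    · exact ⟨.inr ⟨w, hw⟩, hadj, rfl, (Nat.sub_le _ 1).trans (hle x)⟩
    · obtain ⟨y, hxy, hy, hly⟩ := hwalk x hx ⟨w, hw⟩ hadj
      exact ⟨.inl y, hxy, congrArg Subtype.val hy, hly⟩
    · exact ⟨.inr ⟨w, hw⟩, hadj, rfl, Nat.sub_le r 1⟩
    · obtain ⟨y, rfl, hy⟩ := hlift w hw
      exact ⟨.inl y, hadj, rfl, (Nat.sub_le r 1).trans_eq hy.symm⟩
  · rintro (x | u)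
    exacts [hle x, le_rfl]
  · intro v
    by_cases hv : v ∈ A
    · exact ⟨.inr ⟨v, hv⟩, rfl, rfl⟩
    · obtain ⟨x, rfl, hx⟩ := hlift v hv
      exact ⟨.inl x, rfl, hx⟩

theorem hasTwLE_addApex (r : ℕ) {L : Overlay (G.induce Aᶜ)} {t : ℝ} (hL : HasTwLE L.H t) :
    HasTwLE (L.addApex r).H (t + A.ncard) := by
  have := L.finW
  rw [← Nat.card_coe_set_eq]
  exact hL.sum_inr L.comap_inl_apexGraph.le

theorem thick_addApex_of_mem (r : ℕ) (L : Overlay (G.induce Aᶜ)) {v : V} (hv : v ∈ A) :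
    (L.addApex r).thick v = 1 := by
  have := L.finW
  have : IsEmpty {x // (L.f x : V) = v} := ⟨fun x => (L.f x.1).2 (by rwa [x.2])⟩
  simp only [thick, addApex, apexMap]
  rw [Nat.card_fiber_sumElim, Nat.card_of_isEmpty (α := {x // (L.f x : V) = v}), zero_add,
    Nat.card_eq_one_iff_exists]
  exact ⟨⟨⟨v, hv⟩, rfl⟩, fun u => Subtype.ext (Subtype.ext u.2)⟩

theorem thick_addApex_of_notMem (r : ℕ) (L : Overlay (G.induce Aᶜ)) {v : V} (hv : v ∉ A) :
    (L.addApex r).thick v = L.thick ⟨v, hv⟩ := by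
  have := L.finW
  have : IsEmpty {u : A // (u : V) = v} := ⟨fun u => hv (u.2 ▸ u.1.2)⟩
  simp only [thick, addApex, apexMap]
  rw [Nat.card_fiber_sumElim, Nat.card_of_isEmpty (α := {u : A // (u : V) = v}), add_zero]
  exact Nat.card_congr (Equiv.subtypeEquivRight fun x => (Subtype.ext_iff (a2 := ⟨v, hv⟩)).symm)

end Overlay

theorem stmt_13_general {V : Type} [Fintype V] (G : SimpleGraph V)
    (r k t a : ℕ)
    (A : Set V) (hA : A.ncard = a)
    (N : ℕ) (𝓛'' : Multiset (Overlay (G.induce Aᶜ)))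
    (h0 : 𝓛'' ≠ 0) (hsize : Multiset.card 𝓛'' = N)
    (hov : ∀ L ∈ 𝓛'', L.IsRNbhdOv r ∧ HasTwLE L.H t)
    (hth : ∀ v : (Aᶜ : Set V), mthick 𝓛'' v ≤ 1 + 1 / (k : ℝ)) :
    ∃ 𝓛 : Multiset (Overlay G), Multiset.card 𝓛 = N ∧
      (∀ L ∈ 𝓛, L.IsRNbhdOv r ∧ HasTwLE L.H ((t : ℝ) + a)) ∧
      (∀ v ∈ A, mthick 𝓛 v = 1) ∧
      (∀ v ∈ (Aᶜ : Set V), mthick 𝓛 v ≤ 1 + 1 / (k : ℝ)) := by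
  refine ⟨𝓛''.map (Overlay.addApex r), by rw [Multiset.card_map, hsize], ?_, ?_, ?_⟩
  · exact Multiset.forall_mem_map_iff.mpr fun L hL =>
      ⟨(hov L hL).1.addApex, hA ▸ Overlay.hasTwLE_addApex r (hov L hL).2⟩
  · intro v hv
    exact mthick_eq_one_of_thick_eq_one (mt Multiset.map_eq_zero.mp h0)
      (Multiset.forall_mem_map_iff.mpr fun L _ => Overlay.thick_addApex_of_mem r L hv)
  · intro v hv
    rw [mthick_map_of_thick_eq 𝓛'' _ fun L _ => Overlay.thick_addApex_of_notMem r L hv]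
    exact hth ⟨v, hv⟩

/-- Lemma 14 (lemma-apex, core): a system of `r`-neighborhood overlays of `G − A` of thickness
at most `1 + 1/k` and treewidth at most `t` can be extended, by adding the `a = |A|` apex
vertices, to a system of `r`-neighborhood overlays of `G` of the same size, with thickness
exactly `1` on `A`, thickness at most `1 + 1/k` outside `A`, and treewidth at most `t + a`. -/
theorem stmt_13 {V : Type} [Fintype V] (G : SimpleGraph V)
    (r k t a : ℕ) (hr : 0 < r) (hk : 0 < k) (ht : 0 < t) (ha : 0 < a)
    (A : Set V) (hA : A.ncard = a)
    (N : ℕ) (𝓛'' : Multiset (Overlay (G.induce Aᶜ)))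
    (h0 : 𝓛'' ≠ 0) (hsize : Multiset.card 𝓛'' = N)
    (hov : ∀ L ∈ 𝓛'', L.IsRNbhdOv r ∧ HasTwLE L.H t)
    (hth : ∀ v : (Aᶜ : Set V), mthick 𝓛'' v ≤ 1 + 1 / (k : ℝ)) :
    ∃ 𝓛 : Multiset (Overlay G), Multiset.card 𝓛 = N ∧
      (∀ L ∈ 𝓛, L.IsRNbhdOv r ∧ HasTwLE L.H ((t : ℝ) + a)) ∧
      (∀ v ∈ A, mthick 𝓛 v = 1) ∧
      (∀ v ∈ (Aᶜ : Set V), mthick 𝓛 v ≤ 1 + 1 / (k : ℝ)) :=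
  stmt_13_general G r k t a A hA N 𝓛'' h0 hsize hov hth
end

section
/- Let r, k, t, m be positive integers and set Δ = 6kr. Let G be a graph with a layering (V₁, …, V_d); for integers j with j ≤ 0 or j > d set V_j = ∅, and for every integer j let G_j be the subgraph of G induced by V_{j−r} ∪ V_{j−r+1} ∪ … ∪ V_{j+Δ+r−1}. Suppose that for every integer j with V(G_j) ≠ ∅ there is a finite multiset 𝓛_j of r-neighborhood overlays of G_j of size exactly m such that θ_{𝓛_j}(v) ≤ 1 + 1/(2k) for every v ∈ V(G_j) and every member (H, f, ℓ) of 𝓛_j satisfies tw(H) ≤ t. Then there exists a nonempty finite multiset 𝓛 of r-neighborhood overlays of G of size Δ·m such that θ_𝓛(v) ≤ 1 + 1/k for every v ∈ V(G) and every member (H, f, ℓ) of 𝓛 satisfies tw(H) ≤ t. -/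
open SimpleGraph

/-!
Fix a residue `a` modulo `Δ` and an index `s < m`. The windows `G_j` with `j ≡ a (mod Δ)` have
cores `V_j ∪ … ∪ V_{j+Δ-1}` that partition `V(G)`, so the disjoint union of the `s`-th overlays of
these windows, with `ℓ` capped by the distance in layers to the ends of the window, is an
`r`-neighborhood overlay of `G`: on the core the cap is at least `r`, and since adjacent vertices
lie in equal or consecutive layers, a positive cap keeps all neighbours inside the window and
drops by at most one along an edge. A disjoint union of graphs of treewidth at most `t` has
treewidth at most `t` (glue the decomposition trees to a hub with an empty bag). Averaging over
the `Δ·m` pairs `(a, s)`, a vertex is counted once for each of the `Δ + 2r` windows containing it,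
so the thickness is at most `(1 + 2r/Δ)(1 + 1/(2k)) = (1 + 1/(3k))(1 + 1/(2k)) ≤ 1 + 1/k`.
-/

namespace SimpleGraph

lemma Reachable.map_of_eq_or_adj {α β : Type*} {A : SimpleGraph α} {B : SimpleGraph β}
    (π : α → β) (h : ∀ ⦃x y⦄, A.Adj x y → π x = π y ∨ B.Adj (π x) (π y)) {u v : α}
    (huv : A.Reachable u v) : B.Reachable (π u) (π v) := by
  rw [reachable_iff_reflTransGen] at huv ⊢
  refine huv.lift' π fun x y hxy => ?_
  show Relation.ReflTransGen B.Adj (π x) (π y)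
  rcases h hxy with heq | hadj
  · rw [heq]
  · exact .single hadj

variable {ι : Type} {τ : ι → Type}

def sigma (Hs : ∀ i, SimpleGraph (τ i)) : SimpleGraph (Σ i, τ i) :=
  ⨆ i, (Hs i).map (Function.Embedding.sigmaMk i)

lemma sigma_adj {Hs : ∀ i, SimpleGraph (τ i)} {x y : Σ i, τ i} :
    (sigma Hs).Adj x y ↔ ∃ i a b, (Hs i).Adj a b ∧ x = ⟨i, a⟩ ∧ y = ⟨i, b⟩ := by
  simp [sigma, eq_comm]

def Hom.sigmaMk (Hs : ∀ i, SimpleGraph (τ i)) (i : ι) : Hs i →g sigma Hs where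
  toFun := Sigma.mk i
  map_rel' h := sigma_adj.mpr ⟨i, _, _, h, rfl, rfl⟩

def hubGlue (Ts : ∀ i, SimpleGraph (τ i)) (rt : ∀ i, τ i) : SimpleGraph (Option (Σ i, τ i)) where
  Adj x y := (∃ i a b, (Ts i).Adj a b ∧ x = some ⟨i, a⟩ ∧ y = some ⟨i, b⟩) ∨
    ∃ i, s(x, y) = s(none, some ⟨i, rt i⟩)
  symm := ⟨by
    rintro x y (⟨i, a, b, h, rfl, rfl⟩ | ⟨i, h⟩)
    exacts [.inl ⟨i, b, a, h.symm, rfl, rfl⟩, .inr ⟨i, Sym2.eq_swap.trans h⟩]⟩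
  loopless := ⟨by
    rintro x (⟨i, a, b, h, rfl, hb⟩ | ⟨i, h⟩)
    · cases hb
      exact h.ne rfl
    · rcases Sym2.eq_iff.mp h with ⟨rfl, h⟩ | ⟨rfl, h⟩ <;> cases h⟩

variable {Ts : ∀ i, SimpleGraph (τ i)} {rt : ∀ i, τ i}

lemma hubGlue_adj {x y : Option (Σ i, τ i)} : (hubGlue Ts rt).Adj x y ↔
    (∃ i a b, (Ts i).Adj a b ∧ x = some ⟨i, a⟩ ∧ y = some ⟨i, b⟩) ∨
      ∃ i, s(x, y) = s(none, some ⟨i, rt i⟩) :=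
  .rfl

def Hom.hubGlueSome (i : ι) : Ts i →g hubGlue Ts rt where
  toFun a := some ⟨i, a⟩
  map_rel' h := hubGlue_adj.mpr (.inl ⟨i, _, _, h, rfl, rfl⟩)

lemma hubGlue_connected (h : ∀ i, (Ts i).Connected) : (hubGlue Ts rt).Connected := by
  have hub : ∀ x, (hubGlue Ts rt).Reachable x none := by
    rintro (_ | ⟨i, a⟩)
    · rfl
    · refine (((h i).preconnected a (rt i)).map (Hom.hubGlueSome i)).trans ?_
      exact Adj.reachable (hubGlue_adj.mpr (.inr ⟨i, Sym2.eq_swap⟩))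
  exact ⟨fun x y => (hub x).trans (hub y).symm⟩

open Classical in
noncomputable def hubGlueProj (rt : ∀ i, τ i) (i : ι) : Option (Σ i, τ i) → τ i
  | some ⟨j, c⟩ => if h : j = i then h ▸ c else rt i
  | none => rt i

lemma hubGlue_isBridge_of_adj {i : ι} {a b : τ i} (hbr : (Ts i).IsBridge s(a, b)) :
    (hubGlue Ts rt).IsBridge s(some ⟨i, a⟩, some ⟨i, b⟩) := by
  intro hre
  refine hbr ?_
  have := hre.map_of_eq_or_adj (B := (Ts i).deleteEdges {s(a, b)}) (hubGlueProj rt i) ?_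
  · simpa [hubGlueProj] using this
  rintro x y ⟨hxy, hne⟩
  rcases hubGlue_adj.mp hxy with ⟨j, c, e, hce, rfl, rfl⟩ | ⟨j, hxy⟩
  · by_cases hji : j = i
    · subst hji
      refine .inr ⟨by simpa [hubGlueProj] using hce, fun h => hne ?_⟩
      simp_all [hubGlueProj]
    · simp [hubGlueProj, hji]
  · left
    rcases Sym2.eq_iff.mp hxy with ⟨rfl, rfl⟩ | ⟨rfl, rfl⟩ <;>
      by_cases hji : j = i <;> simp [hubGlueProj, hji] <;> subst hji <;> rfl

lemma hubGlue_isBridge_hub (i : ι) : (hubGlue Ts rt).IsBridge s(none, some ⟨i, rt i⟩) := by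
  intro hre
  have := hre.map_of_eq_or_adj (B := ⊥) (fun x => x.map Sigma.fst = some i) ?_
  · simp at this
  rintro x y ⟨hxy, hne⟩
  rcases hubGlue_adj.mp hxy with ⟨j, c, e, hce, rfl, rfl⟩ | ⟨j, hxy⟩
  · simp
  · left
    rcases Sym2.eq_iff.mp hxy with ⟨rfl, rfl⟩ | ⟨rfl, rfl⟩ <;>
      obtain rfl | hji := eq_or_ne j i <;> simp_all [Sym2.eq_swap]

lemma hubGlue_isAcyclic (h : ∀ i, (Ts i).IsAcyclic) : (hubGlue Ts rt).IsAcyclic := by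
  rw [isAcyclic_iff_forall_adj_isBridge]
  intro x y hxy
  rcases hubGlue_adj.mp hxy with ⟨i, a, b, hab, rfl, rfl⟩ | ⟨i, hxy⟩
  · exact hubGlue_isBridge_of_adj (isAcyclic_iff_forall_adj_isBridge.mp (h i) hab)
  · exact hxy ▸ hubGlue_isBridge_hub i

end SimpleGraph

open SimpleGraph

section TreeDecomp

variable {ι : Type} {Wf Tt : ι → Type}

def sigmaBags (β : ∀ i, Tt i → Set (Wf i)) : Option (Σ i, Tt i) → Set (Σ i, Wf i)
  | some ⟨i, a⟩ => Sigma.mk i '' β i a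
  | none => ∅

lemma mk_mem_sigmaBags {β : ∀ i, Tt i → Set (Wf i)} {x : Option (Σ i, Tt i)} {i : ι} {w : Wf i} :
    ⟨i, w⟩ ∈ sigmaBags β x ↔ ∃ a, x = some ⟨i, a⟩ ∧ w ∈ β i a := by
  rcases x with _ | ⟨j, a⟩
  · simp [sigmaBags]
  · simp only [sigmaBags, Set.mem_image, Sigma.mk.injEq, Option.some.injEq]
    constructor
    · rintro ⟨w', hw', rfl, hww⟩
      exact ⟨a, ⟨rfl, .rfl⟩, eq_of_heq hww ▸ hw'⟩
    · rintro ⟨a, ⟨rfl, haa⟩, hw⟩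
      exact ⟨w, eq_of_heq haa ▸ hw, rfl, .rfl⟩

lemma IsTreeDecomp.sigma {Hs : ∀ i, SimpleGraph (Wf i)} {Tr : ∀ i, SimpleGraph (Tt i)}
    {β : ∀ i, Tt i → Set (Wf i)} (h : ∀ i, IsTreeDecomp (Hs i) (Tr i) (β i)) (rt : ∀ i, Tt i) :
    IsTreeDecomp (SimpleGraph.sigma Hs) (hubGlue Tr rt) (sigmaBags β) := by
  refine ⟨⟨hubGlue_connected fun i => (h i).1.connected,
    hubGlue_isAcyclic fun i => (h i).1.isAcyclic⟩, ?_, ?_⟩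
  · intro u v huv
    obtain ⟨i, a, b, hab, rfl, rfl⟩ := sigma_adj.mp huv
    obtain ⟨t, hat, hbt⟩ := (h i).2.1 hab
    exact ⟨some ⟨i, t⟩, mk_mem_sigmaBags.mpr ⟨t, rfl, hat⟩, mk_mem_sigmaBags.mpr ⟨t, rfl, hbt⟩⟩
  · rintro ⟨i, w⟩
    refine ((h i).2.2 w).map (induceHom (Hom.hubGlueSome i)
      fun a ha => mk_mem_sigmaBags.mpr ⟨a, rfl, ha⟩) ?_
    rintro ⟨x, hx⟩
    obtain ⟨a, rfl, ha⟩ := mk_mem_sigmaBags.mp hx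
    exact ⟨⟨a, ha⟩, rfl⟩

lemma HasTwLE.sigma {Hs : ∀ i, SimpleGraph (Wf i)} {t : ℝ} (ht : 0 ≤ t + 1)
    (h : ∀ i, HasTwLE (Hs i) t) : HasTwLE (SimpleGraph.sigma Hs) t := by
  choose Tt Tr β hdec hsize using h
  refine ⟨_, _, _, IsTreeDecomp.sigma hdec fun i => (hdec i).1.connected.nonempty.some, ?_⟩
  rintro (_ | ⟨i, a⟩)
  · simpa [sigmaBags] using ht
  · rw [sigmaBags, Set.ncard_image_of_injective _ sigma_mk_injective]
    exact hsize i a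

end TreeDecomp

namespace Overlay

variable {V : Type} {G : SimpleGraph V}

section Sigma

variable {ι : Type} [Finite ι] (L : ι → Overlay G)

protected def sigma : Overlay G where
  W := Σ i, (L i).W
  finW := have := fun i => (L i).finW; inferInstance
  H := SimpleGraph.sigma fun i => (L i).H
  f x := (L x.1).f x.2
  hom x y hxy := by
    obtain ⟨i, a, b, hab, rfl, rfl⟩ := sigma_adj.mp hxy
    exact (L i).hom hab
  ell x := (L x.1).ell x.2

lemma thick_sigma [Fintype ι] (v : V) : (Overlay.sigma L).thick v = ∑ i, (L i).thick v := by
  have := fun i => (L i).finW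
  let e : {x : Σ i, (L i).W // (L x.1).f x.2 = v} ≃ Σ i, {x // (L i).f x = v} :=
    { toFun p := ⟨p.1.1, p.1.2, p.2⟩
      invFun q := ⟨⟨q.1, q.2.1⟩, q.2.2⟩ }
  exact (Nat.card_congr e).trans Nat.card_sigma

variable {L}

lemma walkPres_sigma (hL : ∀ i, WalkPres (L i).H G (L i).f (L i).ell) :
    WalkPres (Overlay.sigma L).H G (Overlay.sigma L).f (Overlay.sigma L).ell := by
  rintro ⟨i, x⟩ hx w hw
  obtain ⟨y, hxy, hy, hℓ⟩ := hL i x hx w hw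
  exact ⟨⟨i, y⟩, (Hom.sigmaMk _ i).map_adj hxy, hy, hℓ⟩

lemma isRNbhdOv_sigma {r : ℕ} (hwalk : ∀ i, WalkPres (L i).H G (L i).f (L i).ell)
    (hle : ∀ i x, (L i).ell x ≤ r) (hcover : ∀ v, ∃ i x, (L i).f x = v ∧ (L i).ell x = r) :
    (Overlay.sigma L).IsRNbhdOv r :=
  ⟨(Overlay.sigma L).hom, walkPres_sigma hwalk, fun x => hle x.1 x.2,
    fun v => (hcover v).elim fun i ⟨x, hx⟩ => ⟨⟨i, x⟩, hx⟩⟩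

end Sigma

section OfInduce

variable {S : Set V}

def ofInduce (L : Overlay (G.induce S)) (ρ : V → ℕ) : Overlay G where
  W := L.W
  finW := L.finW
  H := L.H
  f x := L.f x
  hom _ _ h := L.hom h
  ell x := min (L.ell x) (ρ (L.f x))

variable (L : Overlay (G.induce S)) (ρ : V → ℕ)

lemma thick_ofInduce_of_mem {v : V} (hv : v ∈ S) : (L.ofInduce ρ).thick v = L.thick ⟨v, hv⟩ :=
  Nat.card_congr (Equiv.subtypeEquivRight fun _ => by simp [ofInduce, Subtype.ext_iff])

lemma thick_ofInduce_of_notMem {v : V} (hv : v ∉ S) : (L.ofInduce ρ).thick v = 0 := by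
  have : IsEmpty {x // (L.ofInduce ρ).f x = v} := ⟨fun ⟨x, hx⟩ => hv (hx ▸ (L.f x).2)⟩
  exact Nat.card_of_isEmpty

open Classical in
lemma sum_thick_ofInduce_le {ι : Type} [Fintype ι] (L : ι → Overlay (G.induce S)) (ρ : V → ℕ)
    {B : ℝ} (hB : ∀ v : S, ∑ s, ((L s).thick v : ℝ) ≤ B) (v : V) :
    ∑ s, (((L s).ofInduce ρ).thick v : ℝ) ≤ if v ∈ S then B else 0 := by
  split_ifs with hv
  · simpa only [thick_ofInduce_of_mem _ _ hv] using hB ⟨v, hv⟩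
  · simp [thick_ofInduce_of_notMem _ _ hv]

variable {L ρ}

lemma walkPres_ofInduce (hL : WalkPres L.H (G.induce S) L.f L.ell)
    (hρS : ∀ u w, G.Adj u w → 1 ≤ ρ u → w ∈ S) (hρ : ∀ u w, G.Adj u w → ρ u ≤ ρ w + 1) :
    WalkPres (L.ofInduce ρ).H G (L.ofInduce ρ).f (L.ofInduce ρ).ell := by
  intro x hx w hw
  have hx' : 1 ≤ L.ell x ∧ 1 ≤ ρ (L.f x) := le_min_iff.mp hx
  obtain ⟨y, hxy, hy, hℓ⟩ := hL x hx'.1 ⟨w, hρS _ _ hw hx'.2⟩ hw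
  refine ⟨y, hxy, congrArg Subtype.val hy, ?_⟩
  have := hρ _ _ hw
  simp only [ofInduce, hy] at this ⊢
  omega

end OfInduce

end Overlay

lemma Multiset.exists_eq_map_univ_fin {α : Type*} {M : Multiset α} {m : ℕ}
    (hM : Multiset.card M = m) : ∃ O : Fin m → α, M = Finset.univ.val.map O := by
  obtain ⟨l, rfl⟩ : ∃ l : List α, (l : Multiset α) = M := ⟨M.toList, M.coe_toList⟩
  rw [Multiset.coe_card] at hM
  subst hM
  exact ⟨l.get, by rw [Fin.univ_val_map, List.ofFn_get]⟩

lemma mthick_map_val {V ι : Type} {G : SimpleGraph V} (s : Finset ι) (F : ι → Overlay G) (v : V) :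
    mthick (s.val.map F) v = (∑ p ∈ s, ((F p).thick v : ℝ)) / s.card := by
  simp only [mthick, Multiset.map_map, Multiset.card_map, Finset.card_val]
  rfl

lemma Int.exists_modEq_le_lt (a x : ℤ) {w : ℤ} (hw : 0 < w) :
    ∃ j, j ≡ a [ZMOD w] ∧ j ≤ x ∧ x < j + w := by
  refine ⟨x - (x - a) % w, ?_, ?_, ?_⟩
  · simpa using ((Int.mod_modEq (x - a) w).sub_left x)
  · linarith [Int.emod_nonneg (x - a) hw.ne']
  · linarith [Int.emod_lt_of_pos (x - a) hw]

section Windows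

variable {V : Type} {G : SimpleGraph V}

def windowDepth (idx : V → ℤ) (r w : ℕ) (j : ℤ) (v : V) : ℕ :=
  min (idx v - (j - r)).toNat (j + w + r - 1 - idx v).toNat

def windowSum (idx : V → ℤ) (r w : ℕ) {m : ℕ} {S : ℤ → Set V}
    (O : ∀ j, Fin m → Overlay (G.induce (S j))) (T : Finset ℤ) (s : Fin m) : Overlay G :=
  Overlay.sigma fun j : T => (O j s).ofInduce (windowDepth idx r w j)

variable {idx : V → ℤ} {r w m : ℕ} {S : ℤ → Set V}

lemma windowDepth_le_succ_of_adj (hadj : ∀ u v, G.Adj u v → |idx u - idx v| ≤ 1) {u v : V}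
    (huv : G.Adj u v) (j : ℤ) :
    windowDepth idx r w j u ≤ windowDepth idx r w j v + 1 := by
  have := abs_le.mp (hadj u v huv)
  simp only [windowDepth]
  omega

lemma mem_of_adj_of_one_le_windowDepth
    (hS : ∀ j v, v ∈ S j ↔ j - r ≤ idx v ∧ idx v ≤ j + w + r - 1)
    (hadj : ∀ u v, G.Adj u v → |idx u - idx v| ≤ 1) {j : ℤ} {u v : V} (huv : G.Adj u v)
    (hu : 1 ≤ windowDepth idx r w j u) : v ∈ S j := by
  have := abs_le.mp (hadj u v huv)
  simp only [windowDepth] at hu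
  exact (hS j v).mpr (by omega)

lemma isRNbhdOv_windowSum (hS : ∀ j v, v ∈ S j ↔ j - r ≤ idx v ∧ idx v ≤ j + w + r - 1)
    (hadj : ∀ u v, G.Adj u v → |idx u - idx v| ≤ 1) {O : ∀ j, Fin m → Overlay (G.induce (S j))}
    (hO : ∀ j s, (O j s).IsRNbhdOv r) {T : Finset ℤ}
    (hT : ∀ v, ∃ j ∈ T, j ≤ idx v ∧ idx v < j + w) (s : Fin m) :
    (windowSum idx r w O T s).IsRNbhdOv r := by
  refine Overlay.isRNbhdOv_sigma
    (fun j => Overlay.walkPres_ofInduce (hO j s).2.1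
      (fun _ _ => mem_of_adj_of_one_le_windowDepth hS hadj)
      (fun _ _ huv => windowDepth_le_succ_of_adj hadj huv j))
    (fun j x => (min_le_left _ _).trans ((hO j s).2.2.1 x)) fun v => ?_
  obtain ⟨j, hjT, hj⟩ := hT v
  obtain ⟨x, hx, hxr⟩ := (hO j s).2.2.2 ⟨v, (hS j v).mpr (by omega)⟩
  refine ⟨⟨j, hjT⟩, x, congrArg Subtype.val hx, ?_⟩
  change min ((O j s).ell x) (windowDepth idx r w j ((O j s).f x)) = r
  rw [hxr, hx]
  dsimp only [windowDepth]
  omega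

open Finset

lemma thick_windowSum (O : ∀ j, Fin m → Overlay (G.induce (S j))) (T : Finset ℤ) (s : Fin m)
    (v : V) : (windowSum idx r w O T s).thick v =
      ∑ j ∈ T, ((O j s).ofInduce (windowDepth idx r w j)).thick v :=
  (Overlay.thick_sigma _ v).trans
    (sum_coe_sort T fun j => ((O j s).ofInduce (windowDepth idx r w j)).thick v)

lemma sum_thick_windowSum_emod (hw : 0 < w) (O : ∀ j, Fin m → Overlay (G.induce (S j)))
    (J : Finset ℤ) (v : V) :
    ∑ a ∈ Ico (0 : ℤ) w, ∑ s, (windowSum idx r w O {j ∈ J | j % w = a} s).thick v =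
      ∑ j ∈ J, ∑ s, ((O j s).ofInduce (windowDepth idx r w j)).thick v := by
  simp_rw [thick_windowSum]
  rw [sum_congr rfl fun a _ => sum_comm]
  exact sum_fiberwise_of_maps_to (fun j _ =>
    mem_Ico.mpr ⟨Int.emod_nonneg j (by omega), Int.emod_lt_of_pos j (by omega)⟩) _

open Classical in
lemma card_filter_mem_window_le (hS : ∀ j v, v ∈ S j ↔ j - r ≤ idx v ∧ idx v ≤ j + w + r - 1)
    (J : Finset ℤ) (v : V) : #{j ∈ J | v ∈ S j} ≤ w + 2 * r := by
  calc #{j ∈ J | v ∈ S j} ≤ #(Icc (idx v + 1 - w - r) (idx v + r)) :=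
        card_le_card fun j hj => by
          rw [mem_filter, hS] at hj
          rw [mem_Icc]
          omega
    _ = w + 2 * r := by
        rw [Int.card_Icc]
        omega

lemma sum_thick_windowSum_le (hw : 0 < w) {c : ℝ} (hc : 0 ≤ c)
    (hS : ∀ j v, v ∈ S j ↔ j - r ≤ idx v ∧ idx v ≤ j + w + r - 1)
    (O : ∀ j, Fin m → Overlay (G.induce (S j)))
    (hOc : ∀ j (v : S j), ∑ s, ((O j s).thick v : ℝ) ≤ m * c) (J : Finset ℤ) (v : V) :
    ∑ a ∈ Ico (0 : ℤ) w, ∑ s, ((windowSum idx r w O {j ∈ J | j % w = a} s).thick v : ℝ) ≤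
      (w + 2 * r) * (m * c) := by
  classical
  calc _ = ∑ j ∈ J, ∑ s, (((O j s).ofInduce (windowDepth idx r w j)).thick v : ℝ) := by
        exact_mod_cast sum_thick_windowSum_emod hw O J v
    _ ≤ ∑ j ∈ J, if v ∈ S j then m * c else 0 :=
        sum_le_sum fun j _ => Overlay.sum_thick_ofInduce_le _ _ (hOc j) v
    _ = #{j ∈ J | v ∈ S j} * (m * c) := by rw [← sum_filter, sum_const, nsmul_eq_mul]
    _ ≤ (w + 2 * r) * (m * c) := by
        gcongr
        exact_mod_cast card_filter_mem_window_le hS J v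

theorem exists_overlays_of_windows (hw : 0 < w) (hm : 0 < m) {t : ℝ} (ht : 0 ≤ t + 1) {c : ℝ}
    (hc : 0 ≤ c) (hS : ∀ j v, v ∈ S j ↔ j - r ≤ idx v ∧ idx v ≤ j + w + r - 1)
    (hadj : ∀ u v, G.Adj u v → |idx u - idx v| ≤ 1) {J : Finset ℤ}
    (hJ : ∀ v j, j ≤ idx v → idx v < j + w → j ∈ J) (O : ∀ j, Fin m → Overlay (G.induce (S j)))
    (hO : ∀ j s, (O j s).IsRNbhdOv r ∧ HasTwLE (O j s).H t)
    (hOc : ∀ j (v : S j), ∑ s, ((O j s).thick v : ℝ) ≤ m * c) :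
    ∃ 𝓛 : Multiset (Overlay G), Multiset.card 𝓛 = w * m ∧
      (∀ L ∈ 𝓛, L.IsRNbhdOv r ∧ HasTwLE L.H t) ∧
      ∀ v, mthick 𝓛 v ≤ (w + 2 * r) / w * c := by
  classical
  set P := Ico (0 : ℤ) w ×ˢ (univ : Finset (Fin m))
  set C : ℤ × Fin m → Overlay G := fun p => windowSum idx r w O {j ∈ J | j % w = p.1} p.2
  have hP : #P = w * m := by simp [P]
  refine ⟨P.val.map C, by simp [hP], ?_, fun v => ?_⟩
  · simp only [Multiset.mem_map, mem_val, forall_exists_index, and_imp]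
    rintro _ ⟨a, s⟩ hp rfl
    have ha : 0 ≤ a ∧ a < w := by simpa [P] using hp
    refine ⟨isRNbhdOv_windowSum hS hadj (fun j s => (hO j s).1) (fun v => ?_) s,
      HasTwLE.sigma ht fun j => (hO j s).2⟩
    obtain ⟨j, hja, hj⟩ := Int.exists_modEq_le_lt a (idx v) (show (0 : ℤ) < w by omega)
    refine ⟨j, mem_filter.mpr ⟨hJ v j hj.1 hj.2, ?_⟩, hj⟩
    rw [hja, Int.emod_eq_of_lt ha.1 ha.2]
  · rw [mthick_map_val, hP, div_le_iff₀ (by positivity), sum_product]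
    calc _ ≤ (w + 2 * r) * (m * c) := by exact_mod_cast sum_thick_windowSum_le hw hc hS O hOc J v
      _ = (w + 2 * r) / w * c * ↑(w * m) := by
          push_cast
          field_simp

end Windows

lemma exists_fin_overlays_of_multiset {V : Type} {G : SimpleGraph V} {r m : ℕ} (hm : 0 < m)
    {t : ℝ} (ht : 0 ≤ t + 1) {c : ℝ}
    (h : Nonempty V → ∃ 𝓛 : Multiset (Overlay G), Multiset.card 𝓛 = m ∧
      (∀ L ∈ 𝓛, L.IsRNbhdOv r ∧ HasTwLE L.H t) ∧ ∀ v, mthick 𝓛 v ≤ c) :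
    ∃ O : Fin m → Overlay G, (∀ s, (O s).IsRNbhdOv r ∧ HasTwLE (O s).H t) ∧
      ∀ v, ∑ s, ((O s).thick v : ℝ) ≤ m * c := by
  by_cases hV : Nonempty V
  · obtain ⟨𝓛, hcard, hprop, hthick⟩ := h hV
    obtain ⟨O, rfl⟩ := Multiset.exists_eq_map_univ_fin hcard
    refine ⟨O, fun s => hprop _ (Multiset.mem_map_of_mem _ (Finset.mem_univ_val s)), fun v => ?_⟩
    have := hthick v
    rw [mthick_map_val, Finset.card_univ, Fintype.card_fin, div_le_iff₀ (by positivity)] at this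
    linarith
  · have : IsEmpty V := not_nonempty_iff.mp hV
    -- the empty overlay, as the disjoint union of no overlays
    let O₀ : Overlay G := Overlay.sigma (isEmptyElim : Empty → Overlay G)
    refine ⟨fun _ => O₀, fun _ => ⟨?_, HasTwLE.sigma ht isEmptyElim⟩, isEmptyElim⟩
    exact Overlay.isRNbhdOv_sigma isEmptyElim isEmptyElim isEmptyElim

lemma exists_layerIndex {V : Type} {G : SimpleGraph V} {d : ℕ} {layer : ℤ → Set V}
    (hdisj : ∀ i j : ℤ, i ≠ j → Disjoint (layer i) (layer j))
    (hunion : (⋃ i : ℤ, layer i) = Set.univ)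
    (hzero : ∀ i : ℤ, (i ≤ 0 ∨ (d : ℤ) < i) → layer i = ∅)
    (hedge : ∀ i j : ℤ, 2 ≤ |i - j| → ∀ u ∈ layer i, ∀ v ∈ layer j, ¬ G.Adj u v) :
    ∃ idx : V → ℤ, (∀ i v, v ∈ layer i ↔ idx v = i) ∧ (∀ v, 1 ≤ idx v ∧ idx v ≤ d) ∧
      ∀ u v, G.Adj u v → |idx u - idx v| ≤ 1 := by
  choose idx hidx using fun v => Set.mem_iUnion.mp (hunion ▸ Set.mem_univ v)
  have hmem : ∀ i v, v ∈ layer i ↔ idx v = i := fun i v =>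
    ⟨fun hv => by_contra fun hne => Set.disjoint_left.mp (hdisj _ _ hne) (hidx v) hv,
      fun h => h ▸ hidx v⟩
  refine ⟨idx, hmem, fun v => ?_, fun u v huv => ?_⟩
  · by_contra hout
    simpa [hzero (idx v) (by omega)] using hidx v
  · by_contra hfar
    exact hedge _ _ (by linarith [not_le.mp hfar]) u (hidx u) v (hidx v) huv

lemma window_thickness_le (k r : ℕ) (hk : 0 < k) (hr : 0 < r) :
    ((6 * k * r : ℕ) + 2 * r : ℝ) / (6 * k * r : ℕ) * (1 + 1 / (2 * k)) ≤ 1 + 1 / k := by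
  have hk' : (1 : ℝ) ≤ k := by exact_mod_cast hk
  have hr' : (1 : ℝ) ≤ r := by exact_mod_cast hr
  push_cast
  rw [div_mul_eq_mul_div, div_le_iff₀ (by positivity)]
  field_simp
  nlinarith [mul_le_mul_of_nonneg_right hk' (by positivity : (0 : ℝ) ≤ r)]

theorem stmt_14_general {V : Type} (G : SimpleGraph V)
    (r k t m : ℕ) (hr : 0 < r) (hk : 0 < k) (hm : 0 < m)
    (d : ℕ) (layer : ℤ → Set V)
    (hdisj : ∀ i j : ℤ, i ≠ j → Disjoint (layer i) (layer j))
    (hunion : (⋃ i : ℤ, layer i) = Set.univ)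
    (hzero : ∀ i : ℤ, (i ≤ 0 ∨ (d : ℤ) < i) → layer i = ∅)
    (hedge : ∀ i j : ℤ, 2 ≤ |i - j| → ∀ u ∈ layer i, ∀ v ∈ layer j, ¬ G.Adj u v)
    (hov : ∀ j : ℤ,
      (⋃ i ∈ Set.Icc (j - (r : ℤ)) (j + 6 * (k : ℤ) * (r : ℤ) + (r : ℤ) - 1), layer i).Nonempty →
      ∃ 𝓛j : Multiset (Overlay (G.induce
          (⋃ i ∈ Set.Icc (j - (r : ℤ)) (j + 6 * (k : ℤ) * (r : ℤ) + (r : ℤ) - 1), layer i))),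
        Multiset.card 𝓛j = m ∧
        (∀ L ∈ 𝓛j, L.IsRNbhdOv r ∧ HasTwLE L.H t) ∧
        (∀ v, mthick 𝓛j v ≤ 1 + 1 / (2 * (k : ℝ)))) :
    ∃ 𝓛 : Multiset (Overlay G),
      Multiset.card 𝓛 = 6 * k * r * m ∧
      (∀ L ∈ 𝓛, L.IsRNbhdOv r ∧ HasTwLE L.H t) ∧
      (∀ v : V, mthick 𝓛 v ≤ 1 + 1 / (k : ℝ)) := by
  obtain ⟨idx, hmem, hrange, hadj⟩ := exists_layerIndex hdisj hunion hzero hedge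
  have hS : ∀ j v, v ∈ ⋃ i ∈ Set.Icc (j - (r : ℤ)) (j + 6 * (k : ℤ) * (r : ℤ) + (r : ℤ) - 1),
      layer i ↔ j - r ≤ idx v ∧ idx v ≤ j + (6 * k * r : ℕ) + r - 1 := by
    intro j v
    simp [hmem]
  choose O hO hOc using fun j => exists_fin_overlays_of_multiset hm (t := t) (by positivity)
    fun hne => hov j (Set.nonempty_coe_sort.mp hne)
  obtain ⟨𝓛, hcard, hprop, hthick⟩ := exists_overlays_of_windows (by positivity) hm
    (by positivity) (by positivity) hS hadj (J := Finset.Icc (1 - (6 * k * r : ℕ)) d)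
    (fun v j h1 h2 => Finset.mem_Icc.mpr (by have := hrange v; omega)) O hO hOc
  exact ⟨𝓛, hcard, hprop, fun v => (hthick v).trans (window_thickness_le k r hk hr)⟩

/-- Lemma 15 (lemma-layering, core): given a layering of `G` and, for every window
`G_j = G[V_{j−r} ∪ … ∪ V_{j+Δ+r−1}]` (with `Δ = 6kr`), a system of `r`-neighborhood
overlays of `G_j` of size `m`, thickness at most `1 + 1/(2k)` and treewidth at most `t`,
there is a system of `r`-neighborhood overlays of `G` of size `Δ·m`, thickness at most
`1 + 1/k` and treewidth at most `t`. -/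
theorem stmt_14 {V : Type} [Fintype V] (G : SimpleGraph V)
    (r k t m : ℕ) (hr : 0 < r) (hk : 0 < k) (ht : 0 < t) (hm : 0 < m)
    (d : ℕ) (layer : ℤ → Set V)
    (hdisj : ∀ i j : ℤ, i ≠ j → Disjoint (layer i) (layer j))
    (hunion : (⋃ i : ℤ, layer i) = Set.univ)
    (hzero : ∀ i : ℤ, (i ≤ 0 ∨ (d : ℤ) < i) → layer i = ∅)
    (hedge : ∀ i j : ℤ, 2 ≤ |i - j| → ∀ u ∈ layer i, ∀ v ∈ layer j, ¬ G.Adj u v)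
    (hov : ∀ j : ℤ,
      (⋃ i ∈ Set.Icc (j - (r : ℤ)) (j + 6 * (k : ℤ) * (r : ℤ) + (r : ℤ) - 1), layer i).Nonempty →
      ∃ 𝓛j : Multiset (Overlay (G.induce
          (⋃ i ∈ Set.Icc (j - (r : ℤ)) (j + 6 * (k : ℤ) * (r : ℤ) + (r : ℤ) - 1), layer i))),
        Multiset.card 𝓛j = m ∧
        (∀ L ∈ 𝓛j, L.IsRNbhdOv r ∧ HasTwLE L.H t) ∧
        (∀ v, mthick 𝓛j v ≤ 1 + 1 / (2 * (k : ℝ)))) :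
    ∃ 𝓛 : Multiset (Overlay G),
      Multiset.card 𝓛 = 6 * k * r * m ∧
      (∀ L ∈ 𝓛, L.IsRNbhdOv r ∧ HasTwLE L.H t) ∧
      (∀ v : V, mthick 𝓛 v ≤ 1 + 1 / (k : ℝ)) :=
  stmt_14_general G r k t m hr hk hm d layer hdisj hunion hzero hedge hov
end

section
/- Let s be a positive integer and let G be a graph on n ≥ 2 vertices. Suppose that every induced subgraph G' of G admits a balanced separation of size at most s, that is, there exist a set S ⊆ V(G') with |S| ≤ s and a partition of V(G') ∖ S into two sets P and Q with no edge of G' between P and Q, |P| ≤ (2/3)·|V(G')|, and |Q| ≤ (2/3)·|V(G')|. Then G has a tree decomposition of width at most s·⌈log_{3/2} n⌉. -/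
open SimpleGraph

/-!
Apply balanced separations recursively, indexing the pieces by words over `Bool`: the whole vertex
set sits at the root, and the node of a piece `X` with separation `(S, P, Q)` has the children `P`
and `Q`. A piece shrinks by the factor `2/3` per level, so at depth `k = ⌈log_{3/2} n⌉` it has at
most one vertex, and then its separator is the whole piece. The bag of a node is the union of the
separators on its path to the root: at most `s` vertices per level above it, plus at most `s`
vertices at the node itself, or at most one at depth `k`. Every vertex lies in exactly one
separator, so the nodes whose bags contain it form the subtree below that separator; and adjacent
vertices are never split between `P` and `Q`, so their separator nodes lie on a common root path.
-/

namespace SimpleGraph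

variable {V : Type*} {G : SimpleGraph V}

theorem connected_of_exists_adj_lt (r : V) (h : V → ℕ)
    (hstep : ∀ x, x ≠ r → ∃ y, G.Adj x y ∧ h y < h x) : G.Connected := by
  have reach : ∀ n x, h x = n → G.Reachable x r := by
    intro n
    induction n using Nat.strong_induction_on with
    | _ n ih =>
      intro x hx
      by_cases hxr : x = r
      · exact hxr ▸ Reachable.refl _
      obtain ⟨y, hxy, hy⟩ := hstep x hxr
      exact hxy.reachable.trans (ih _ (hx ▸ hy) y rfl)
  exact (connected_iff _).2 ⟨fun x y => (reach _ x rfl).trans (reach _ y rfl).symm, ⟨r⟩⟩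

/-- On a cycle, a vertex of maximal height has two distinct neighbours, both strictly lower. -/
theorem isAcyclic_of_unique_lower_adj (h : V → ℕ) (hne : ∀ ⦃x y⦄, G.Adj x y → h x ≠ h y)
    (huniq : ∀ ⦃x y z⦄, G.Adj x y → G.Adj x z → h y < h x → h z < h x → y = z) :
    G.IsAcyclic := by
  classical
  intro v c hc
  obtain ⟨u, hu, hmax⟩ := c.support.toFinset.exists_max_image h ⟨v, by simp⟩
  rw [List.mem_toFinset] at hu
  set d := c.rotate u hu
  have hd : d.IsCycle := hc.rotate hu
  have lower : ∀ w ∈ d.support, G.Adj u w → h w < h u := fun w hw hadj =>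
    lt_of_le_of_ne (hmax w (by simpa [d] using hw)) (hne hadj).symm
  have hsnd := d.adj_snd hd.not_nil
  have hpen := (d.adj_penultimate hd.not_nil).symm
  exact hd.snd_ne_penultimate <| huniq hsnd hpen (lower _ (d.getVert_mem_support 1) hsnd)
    (lower _ (d.getVert_mem_support _) hpen)

end SimpleGraph

/-- The complete `α`-ary tree of depth `k`. Its nodes are the words of length at most `k`, read
from the node up to the root: the children of `l` are the words `b :: l`. -/
def wordTree (α : Type*) (k : ℕ) : SimpleGraph {l : List α // l.length ≤ k} :=
  SimpleGraph.fromRel fun t u => ∃ b, t.1 = b :: u.1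

namespace wordTree

variable {α : Type*} {k : ℕ}

theorem adj_cons {b : α} {l : List α} (h : (b :: l).length ≤ k) :
    (wordTree α k).Adj ⟨b :: l, h⟩ ⟨l, (Nat.le_succ _).trans h⟩ :=
  (SimpleGraph.fromRel_adj _ _ _).2
    ⟨fun h => by simpa using congrArg (·.1.length) h, Or.inl ⟨b, rfl⟩⟩

theorem eq_tail_of_adj {t u : {l : List α // l.length ≤ k}} (hadj : (wordTree α k).Adj t u)
    (hlt : u.1.length < t.1.length) : u.1 = t.1.tail := by
  obtain ⟨-, ⟨b, h⟩ | ⟨b, h⟩⟩ := (SimpleGraph.fromRel_adj _ _ _).1 hadj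
  · simp [h]
  · simp [h] at hlt

theorem length_ne_of_adj {t u : {l : List α // l.length ≤ k}} (hadj : (wordTree α k).Adj t u) :
    t.1.length ≠ u.1.length := by
  obtain ⟨-, ⟨b, h⟩ | ⟨b, h⟩⟩ := (SimpleGraph.fromRel_adj _ _ _).1 hadj <;> simp [h]

theorem induce_suffix_connected (a : List α) (ha : a.length ≤ k) :
    ((wordTree α k).induce {t | a <:+ t.1}).Connected := by
  refine SimpleGraph.connected_of_exists_adj_lt ⟨⟨a, ha⟩, List.suffix_refl a⟩
    (fun t => t.1.1.length) ?_
  rintro ⟨⟨l, hl⟩, hal⟩ hne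
  rcases l with _ | ⟨b, l⟩
  · exact absurd (Subtype.ext (Subtype.ext (List.eq_nil_of_suffix_nil hal)).symm) hne
  rcases List.suffix_cons_iff.1 hal with heq | hal'
  · exact absurd (Subtype.ext (Subtype.ext heq.symm)) hne
  exact ⟨⟨_, hal'⟩, adj_cons hl, by simp⟩

theorem isTree : (wordTree α k).IsTree := by
  refine ⟨?_, SimpleGraph.isAcyclic_of_unique_lower_adj (fun t => t.1.length)
    (fun _ _ => length_ne_of_adj) fun t u w htu htw hu hw => ?_⟩
  · refine SimpleGraph.connected_of_exists_adj_lt ⟨[], Nat.zero_le k⟩ (fun t => t.1.length) ?_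
    rintro ⟨_ | ⟨b, l⟩, hl⟩ hne
    · exact absurd rfl hne
    · exact ⟨_, adj_cons hl, by simp⟩
  · exact Subtype.ext ((eq_tail_of_adj htu hu).trans (eq_tail_of_adj htw hw).symm)

end wordTree

section BalancedSeparations

variable {V : Type} [DecidableEq V]

structure IsBalancedSep (G : SimpleGraph V) (s : ℕ) (X S P Q : Finset V) : Prop where
  union_eq : S ∪ P ∪ Q = X
  disjoint_SP : Disjoint S P
  disjoint_SQ : Disjoint S Q
  disjoint_PQ : Disjoint P Q
  card_S_le : S.card ≤ s
  not_adj : ∀ u ∈ P, ∀ v ∈ Q, ¬ G.Adj u v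
  card_P_le : 3 * P.card ≤ 2 * X.card
  card_Q_le : 3 * Q.card ≤ 2 * X.card

namespace IsBalancedSep

variable {G : SimpleGraph V} {s : ℕ} {X S P Q : Finset V}

theorem S_subset (h : IsBalancedSep G s X S P Q) : S ⊆ X :=
  h.union_eq ▸ Finset.subset_union_left.trans Finset.subset_union_left

theorem P_subset (h : IsBalancedSep G s X S P Q) : P ⊆ X :=
  h.union_eq ▸ Finset.subset_union_right.trans Finset.subset_union_left

theorem Q_subset (h : IsBalancedSep G s X S P Q) : Q ⊆ X :=
  h.union_eq ▸ Finset.subset_union_right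

theorem not_eq_or_adj (h : IsBalancedSep G s X S P Q) {u v : V} (hu : u ∈ P) (hv : v ∈ Q) :
    ¬ (u = v ∨ G.Adj u v) := by
  rintro (rfl | hadj)
  · exact Finset.disjoint_left.1 h.disjoint_PQ hu hv
  · exact h.not_adj u hu v hv hadj

/-- Both sides of a separation of at most one vertex are empty, since `3 * |P| ≤ 2`. -/
theorem S_eq_of_card_le_one (h : IsBalancedSep G s X S P Q) (hX : X.card ≤ 1) : S = X := by
  have hP : P = ∅ := Finset.card_eq_zero.1 (by have := h.card_P_le; omega)
  have hQ : Q = ∅ := Finset.card_eq_zero.1 (by have := h.card_Q_le; omega)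
  simpa [hP, hQ] using h.union_eq

end IsBalancedSep

/-- A choice of a balanced separation of every vertex set. -/
structure BalancedSeparator (G : SimpleGraph V) (s : ℕ) where
  S : Finset V → Finset V
  P : Finset V → Finset V
  Q : Finset V → Finset V
  isBalancedSep : ∀ X, IsBalancedSep G s X (S X) (P X) (Q X)

namespace BalancedSeparator

variable [Fintype V] {G : SimpleGraph V} {s : ℕ} (σ : BalancedSeparator G s)

def part : List Bool → Finset V
  | [] => Finset.univ
  | false :: l => σ.P (part l)
  | true :: l => σ.Q (part l)

def sep (l : List Bool) : Finset V := σ.S (σ.part l)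

def bag : List Bool → Finset V
  | [] => σ.sep []
  | b :: l => σ.sep (b :: l) ∪ bag l

theorem sep_subset_part (l : List Bool) : σ.sep l ⊆ σ.part l :=
  (σ.isBalancedSep _).S_subset

theorem card_sep_le (l : List Bool) : (σ.sep l).card ≤ s :=
  (σ.isBalancedSep _).card_S_le

theorem part_cons_subset (b : Bool) (l : List Bool) : σ.part (b :: l) ⊆ σ.part l := by
  cases b
  exacts [(σ.isBalancedSep _).P_subset, (σ.isBalancedSep _).Q_subset]

theorem disjoint_sep_part_cons (b : Bool) (l : List Bool) :
    Disjoint (σ.sep l) (σ.part (b :: l)) := by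
  cases b
  exacts [(σ.isBalancedSep _).disjoint_SP, (σ.isBalancedSep _).disjoint_SQ]

theorem mem_sep_or_mem_part_cons {v : V} {l : List Bool} (hv : v ∈ σ.part l) :
    v ∈ σ.sep l ∨ ∃ b, v ∈ σ.part (b :: l) := by
  rw [← (σ.isBalancedSep (σ.part l)).union_eq] at hv
  simp only [Finset.mem_union] at hv
  rcases hv with (hS | hP) | hQ
  exacts [Or.inl hS, Or.inr ⟨false, hP⟩, Or.inr ⟨true, hQ⟩]

theorem part_subset_part_of_suffix {l t : List Bool} (h : l <:+ t) : σ.part t ⊆ σ.part l := by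
  obtain ⟨c, rfl⟩ := h
  induction c with
  | nil => exact subset_rfl
  | cons b c ih => exact (σ.part_cons_subset b _).trans ih

theorem pow_mul_card_part_le (l : List Bool) :
    3 ^ l.length * (σ.part l).card ≤ 2 ^ l.length * Fintype.card V := by
  induction l with
  | nil => simp [part, Finset.card_univ]
  | cons b l ih =>
    have hb : 3 * (σ.part (b :: l)).card ≤ 2 * (σ.part l).card := by
      cases b
      exacts [(σ.isBalancedSep _).card_P_le, (σ.isBalancedSep _).card_Q_le]
    calc 3 ^ (b :: l).length * (σ.part (b :: l)).card
        = 3 ^ l.length * (3 * (σ.part (b :: l)).card) := by simp only [List.length_cons]; ring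
      _ ≤ 3 ^ l.length * (2 * (σ.part l).card) := Nat.mul_le_mul_left _ hb
      _ = 2 * (3 ^ l.length * (σ.part l).card) := by ring
      _ ≤ 2 * (2 ^ l.length * Fintype.card V) := Nat.mul_le_mul_left _ ih
      _ = 2 ^ (b :: l).length * Fintype.card V := by simp only [List.length_cons]; ring

theorem card_part_le_one {k : ℕ} (hk : 2 ^ k * Fintype.card V ≤ 3 ^ k) {l : List Bool}
    (hl : l.length = k) : (σ.part l).card ≤ 1 := by
  subst hl
  refine Nat.le_of_mul_le_mul_left ?_ (by positivity : 0 < 3 ^ l.length)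
  rw [mul_one]
  exact (σ.pow_mul_card_part_le l).trans hk

theorem sep_eq_part {k : ℕ} (hk : 2 ^ k * Fintype.card V ≤ 3 ^ k) {l : List Bool}
    (hl : l.length = k) : σ.sep l = σ.part l :=
  (σ.isBalancedSep _).S_eq_of_card_le_one (σ.card_part_le_one hk hl)

/-- Two pieces at the same depth containing equal or adjacent vertices coincide: at the node where
their root paths branch, the vertices would lie on different sides of a separation. -/
theorem eq_of_mem_part_of_length_eq {u v : V} (huv : u = v ∨ G.Adj u v) :
    ∀ {a c : List Bool}, u ∈ σ.part a → v ∈ σ.part c → a.length = c.length → a = c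
  | [], [], _, _, _ => rfl
  | b₁ :: a, b₂ :: c, hu, hv, hlen => by
    obtain rfl : a = c := eq_of_mem_part_of_length_eq huv (σ.part_cons_subset b₁ a hu)
      (σ.part_cons_subset b₂ c hv) (by simpa using hlen)
    have hsep := σ.isBalancedSep (σ.part a)
    cases b₁ <;> cases b₂
    · rfl
    · exact absurd huv (hsep.not_eq_or_adj hu hv)
    · exact absurd (huv.imp Eq.symm fun h => h.symm) (hsep.not_eq_or_adj hv hu)
    · rfl

theorem suffix_or_suffix_of_mem_part {u v : V} (huv : u = v ∨ G.Adj u v) {a c : List Bool}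
    (hu : u ∈ σ.part a) (hv : v ∈ σ.part c) : a <:+ c ∨ c <:+ a := by
  wlog hac : a.length ≤ c.length generalizing u v a c
  · exact (this (huv.imp Eq.symm fun h => h.symm) hv hu (by omega)).symm
  left
  have hsuf : c.drop (c.length - a.length) <:+ c := List.drop_suffix _ _
  rw [σ.eq_of_mem_part_of_length_eq huv hu (σ.part_subset_part_of_suffix hsuf hv) (by simp; omega)]
  exact hsuf

theorem eq_of_mem_sep {v : V} {a c : List Bool} (ha : v ∈ σ.sep a) (hc : v ∈ σ.sep c) :
    a = c := by
  wlog hac : a <:+ c generalizing a c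
  · exact (this hc ha ((σ.suffix_or_suffix_of_mem_part (Or.inl rfl) (σ.sep_subset_part a ha)
      (σ.sep_subset_part c hc)).resolve_left hac)).symm
  obtain ⟨d, rfl⟩ := hac
  rcases d.eq_nil_or_concat with rfl | ⟨d, b, rfl⟩
  · rfl
  · have hsuf : b :: a <:+ d.concat b ++ a := ⟨d, by simp⟩
    exact (Finset.disjoint_left.1 (σ.disjoint_sep_part_cons b a) ha
      (σ.part_subset_part_of_suffix hsuf (σ.sep_subset_part _ hc))).elim

theorem exists_mem_sep {k : ℕ} (hk : 2 ^ k * Fintype.card V ≤ 3 ^ k) (v : V) :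
    ∃ a : List Bool, a.length ≤ k ∧ v ∈ σ.sep a := by
  suffices h : ∀ m (l : List Bool), l.length + m = k → v ∈ σ.part l →
      ∃ a : List Bool, a.length ≤ k ∧ v ∈ σ.sep a from h k [] (zero_add k) (Finset.mem_univ v)
  intro m
  induction m with
  | zero => exact fun l hl hv => ⟨l, hl.le, σ.sep_eq_part hk hl ▸ hv⟩
  | succ m ih =>
    intro l hl hv
    rcases σ.mem_sep_or_mem_part_cons hv with hS | ⟨b, hb⟩
    · exact ⟨l, by omega, hS⟩
    · exact ih (b :: l) (by simp; omega) hb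

theorem mem_bag {v : V} {t : List Bool} : v ∈ σ.bag t ↔ ∃ a, a <:+ t ∧ v ∈ σ.sep a := by
  induction t with
  | nil => simp [bag]
  | cons b t ih =>
    simp only [bag, Finset.mem_union, ih, List.suffix_cons_iff]
    constructor
    · rintro (h | ⟨a, ha, h⟩)
      exacts [⟨_, Or.inl rfl, h⟩, ⟨a, Or.inr ha, h⟩]
    · rintro ⟨a, rfl | ha, h⟩
      exacts [Or.inl h, Or.inr ⟨a, ha, h⟩]

theorem card_bag_le (t : List Bool) : (σ.bag t).card ≤ (σ.sep t).card + s * t.length := by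
  induction t with
  | nil => simp [bag]
  | cons b t ih =>
    have := σ.card_sep_le t
    calc (σ.bag (b :: t)).card ≤ (σ.sep (b :: t)).card + (σ.bag t).card :=
          Finset.card_union_le _ _
      _ ≤ (σ.sep (b :: t)).card + s * (b :: t).length := by
          rw [List.length_cons, mul_add_one]; linarith

theorem card_bag_le_of_length_le {k : ℕ} (hk : 2 ^ k * Fintype.card V ≤ 3 ^ k) {t : List Bool}
    (ht : t.length ≤ k) : (σ.bag t).card ≤ s * k + 1 := by
  have hbag := σ.card_bag_le t
  rcases ht.lt_or_eq with ht | rfl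
  · have : s * t.length + s ≤ s * k := by
      rw [← mul_add_one]; exact Nat.mul_le_mul_left s ht
    linarith [σ.card_sep_le t]
  · rw [σ.sep_eq_part hk rfl] at hbag
    linarith [σ.card_part_le_one hk rfl]

theorem mem_bag_iff_suffix {v : V} {a : List Bool} (hva : v ∈ σ.sep a) {t : List Bool} :
    v ∈ σ.bag t ↔ a <:+ t :=
  σ.mem_bag.trans ⟨fun ⟨_, hc, hvc⟩ => σ.eq_of_mem_sep hva hvc ▸ hc, fun h => ⟨a, h, hva⟩⟩

theorem isTreeDecomp {k : ℕ} (hk : 2 ^ k * Fintype.card V ≤ 3 ^ k) :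
    IsTreeDecomp G (wordTree Bool k) fun t => (σ.bag t.1 : Set V) := by
  refine ⟨wordTree.isTree, fun u v huv => ?_, fun v => ?_⟩
  · obtain ⟨a, ha, hua⟩ := σ.exists_mem_sep hk u
    obtain ⟨c, hc, hvc⟩ := σ.exists_mem_sep hk v
    simp only [Finset.mem_coe, σ.mem_bag_iff_suffix hua, σ.mem_bag_iff_suffix hvc]
    rcases σ.suffix_or_suffix_of_mem_part (Or.inr huv) (σ.sep_subset_part a hua)
      (σ.sep_subset_part c hvc) with hac | hca
    · exact ⟨⟨c, hc⟩, hac, List.suffix_refl c⟩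
    · exact ⟨⟨a, ha⟩, List.suffix_refl a, hca⟩
  · obtain ⟨a, ha, hva⟩ := σ.exists_mem_sep hk v
    rw [show {t : {l : List Bool // l.length ≤ k} | v ∈ (σ.bag t.1 : Set V)} = {t | a <:+ t.1}
      from Set.ext fun t => σ.mem_bag_iff_suffix hva]
    exact wordTree.induce_suffix_connected a ha

end BalancedSeparator

theorem hasTwLE_of_forall_exists_isBalancedSep [Fintype V] {G : SimpleGraph V} {s k : ℕ}
    (hsep : ∀ X : Finset V, ∃ S P Q, IsBalancedSep G s X S P Q)
    (hk : 2 ^ k * Fintype.card V ≤ 3 ^ k) : HasTwLE G ((s * k : ℕ) : ℝ) := by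
  choose S P Q h using hsep
  let σ : BalancedSeparator G s := ⟨S, P, Q, h⟩
  refine ⟨_, wordTree Bool k, fun t => σ.bag t.1, σ.isTreeDecomp hk, fun t => ?_⟩
  rw [Set.ncard_coe_finset]
  exact_mod_cast σ.card_bag_le_of_length_le hk t.2

end BalancedSeparations

theorem two_pow_mul_le_three_pow_ceil_logb (n : ℕ) :
    2 ^ ⌈Real.logb (3 / 2) n⌉₊ * n ≤ 3 ^ ⌈Real.logb (3 / 2) n⌉₊ := by
  set k := ⌈Real.logb (3 / 2) n⌉₊
  rcases n.eq_zero_or_pos with rfl | hn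
  · simp
  have hn' : (n : ℝ) ≤ (3 / 2) ^ k := by
    rw [← Real.rpow_natCast, ← Real.logb_le_iff_le_rpow (by norm_num) (by positivity)]
    exact Nat.le_ceil _
  have : (2 : ℝ) ^ k * n ≤ 3 ^ k :=
    calc (2 : ℝ) ^ k * n ≤ 2 ^ k * (3 / 2) ^ k := by gcongr
      _ = 3 ^ k := by rw [← mul_pow]; norm_num
  exact_mod_cast this

theorem stmt_15_general {V : Type} [Fintype V] [DecidableEq V] (G : SimpleGraph V)
    (s : ℕ)
    (hsep : ∀ X : Finset V, ∃ S P Q : Finset V,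
      S ∪ P ∪ Q = X ∧ Disjoint S P ∧ Disjoint S Q ∧ Disjoint P Q ∧
      S.card ≤ s ∧
      (∀ u ∈ P, ∀ v ∈ Q, ¬ G.Adj u v) ∧
      3 * P.card ≤ 2 * X.card ∧ 3 * Q.card ≤ 2 * X.card) :
    HasTwLE G ((s * ⌈Real.logb (3 / 2) (Fintype.card V)⌉₊ : ℕ) : ℝ) := by
  refine hasTwLE_of_forall_exists_isBalancedSep (fun X => ?_)
    (two_pow_mul_le_three_pow_ceil_logb _)
  obtain ⟨S, P, Q, h₁, h₂, h₃, h₄, h₅, h₆, h₇, h₈⟩ := hsep X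
  exact ⟨S, P, Q, h₁, h₂, h₃, h₄, h₅, h₆, h₇, h₈⟩

/-- Observation 20 (obs-twss): if every induced subgraph of an `n`-vertex graph `G` (`n ≥ 2`)
has a balanced separation of size at most `s`, then `G` has a tree decomposition of width at
most `s·⌈log_{3/2} n⌉`. -/
theorem stmt_15 {V : Type} [Fintype V] [DecidableEq V] (G : SimpleGraph V)
    (s : ℕ) (hs : 0 < s) (hn : 2 ≤ Fintype.card V)
    (hsep : ∀ X : Finset V, ∃ S P Q : Finset V,
      S ∪ P ∪ Q = X ∧ Disjoint S P ∧ Disjoint S Q ∧ Disjoint P Q ∧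
      S.card ≤ s ∧
      (∀ u ∈ P, ∀ v ∈ Q, ¬ G.Adj u v) ∧
      3 * P.card ≤ 2 * X.card ∧ 3 * Q.card ≤ 2 * X.card) :
    HasTwLE G ((s * ⌈Real.logb (3 / 2) (Fintype.card V)⌉₊ : ℕ) : ℝ) :=
  stmt_15_general G s hsep
end

section
/- Let ε be a real number with 0 < ε ≤ 1/2 and set α = ε(1−ε)/2. Let c' ≥ 1 and a ≥ 1 be real numbers, and let (n_i)_{i≥1} be a sequence of positive real numbers such that n₁ ≥ max(3, (c'·a^{(1+α)²})^{2/ε}) and n_i ≥ (n_{i−1}/(c'·a^{(1+α)^i}))^{1+ε} for every i ≥ 2. Then for every i ≥ 1: (i) c'·a^{(1+α)^{i+1}} ≤ n_i^{ε/2}; (ii) n_i ≥ n_{i−1}^{1+α} for i ≥ 2; and (iii) n_i ≥ n₁^{(1+α)^{i−1}} ≥ 3^{(1+α)^{i−1}}. -/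
open SimpleGraph

/-!
Write `K_i = c' a^{β^i}` with `β = 1 + α = (1 - ε/2)(1 + ε)`. If `K_{i+1} ≤ n_i^{ε/2}`, then
`n_i / K_{i+1} ≥ n_i^{1 - ε/2}`, so the recurrence gives `n_{i+1} ≥ n_i^β`. Since
`K_{i+2} ≤ K_{i+1}^β ≤ (n_i^β)^{ε/2} ≤ n_{i+1}^{ε/2}`, the bound propagates; the choice of `n_1`
starts the induction.
-/

open Real

theorem rpow_mul_le_of_div_rpow_le {x K y s p : ℝ} (hx : 0 < x) (hK : 0 < K) (hp : 0 ≤ p)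
    (hKx : K ≤ x ^ s) (h : (x / K) ^ p ≤ y) : x ^ ((1 - s) * p) ≤ y :=
  calc x ^ ((1 - s) * p) = (x / x ^ s) ^ p := by
        rw [rpow_mul hx.le, rpow_sub hx, rpow_one]
    _ ≤ (x / K) ^ p := by gcongr
    _ ≤ y := h

theorem mul_rpow_pow_succ_le {c a β : ℝ} (hc : 1 ≤ c) (ha : 0 ≤ a) (hβ : 1 ≤ β) (k : ℕ) :
    c * a ^ (β ^ (k + 1)) ≤ (c * a ^ (β ^ k)) ^ β := by
  rw [mul_rpow (by linarith) (rpow_nonneg ha _), ← rpow_mul ha, ← pow_succ]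
  gcongr
  exact self_le_rpow_of_one_le hc hβ

section Recurrence

variable {ε β c a : ℝ} {n : ℕ → ℝ}

theorem le_rpow_half_and_rpow_pow_le_of_recurrence (hε : 0 ≤ ε)
    (hβ : (1 - ε / 2) * (1 + ε) = β) (hβ1 : 1 ≤ β) (hc : 1 ≤ c) (ha : 0 < a) (hn1 : 0 < n 1)
    (hbase : c * a ^ (β ^ 2) ≤ n 1 ^ (ε / 2))
    (hrec : ∀ k : ℕ, (n (k + 1) / (c * a ^ (β ^ (k + 2)))) ^ (1 + ε) ≤ n (k + 2)) (k : ℕ) :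
    c * a ^ (β ^ (k + 2)) ≤ n (k + 1) ^ (ε / 2) ∧ n 1 ^ (β ^ k) ≤ n (k + 1) := by
  induction k with
  | zero => simpa using hbase
  | succ k ih =>
    obtain ⟨hK, hlow⟩ := ih
    have hpos : 0 < n (k + 1) := (rpow_pos_of_pos hn1 _).trans_le hlow
    have hgrowth : n (k + 1) ^ β ≤ n (k + 2) := by
      rw [← hβ]
      exact rpow_mul_le_of_div_rpow_le hpos (by positivity) (by linarith) hK (hrec k)
    constructor
    · calc c * a ^ (β ^ (k + 1 + 2)) ≤ (c * a ^ (β ^ (k + 2))) ^ β :=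
            mul_rpow_pow_succ_le hc ha.le hβ1 (k + 2)
        _ ≤ (n (k + 1) ^ (ε / 2)) ^ β := by gcongr
        _ = (n (k + 1) ^ β) ^ (ε / 2) := by
            rw [← rpow_mul hpos.le, ← rpow_mul hpos.le, mul_comm]
        _ ≤ n (k + 2) ^ (ε / 2) := by gcongr
    · calc n 1 ^ (β ^ (k + 1)) = (n 1 ^ (β ^ k)) ^ β := by rw [pow_succ, rpow_mul hn1.le]
        _ ≤ n (k + 1) ^ β := by gcongr
        _ ≤ n (k + 2) := hgrowth

end Recurrence

theorem stmt_18_general (ε α c' a : ℝ) (n : ℕ → ℝ)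
    (hε0 : 0 < ε) (hε : ε ≤ 1 / 2) (hα : α = ε * (1 - ε) / 2)
    (hc' : 1 ≤ c') (ha : 1 ≤ a)
    (hn1 : max 3 ((c' * a ^ ((1 + α) ^ 2 : ℝ)) ^ (2 / ε : ℝ)) ≤ n 1)
    (hrec : ∀ i : ℕ, 2 ≤ i →
      (n (i - 1) / (c' * a ^ (((1 + α) ^ i : ℝ)))) ^ (1 + ε : ℝ) ≤ n i) :
    (∀ i : ℕ, 1 ≤ i → c' * a ^ (((1 + α) ^ (i + 1) : ℝ)) ≤ (n i) ^ (ε / 2 : ℝ)) ∧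
    (∀ i : ℕ, 2 ≤ i → (n (i - 1)) ^ (1 + α : ℝ) ≤ n i) ∧
    (∀ i : ℕ, 1 ≤ i →
      (3 : ℝ) ^ (((1 + α) ^ (i - 1) : ℝ)) ≤ (n 1) ^ (((1 + α) ^ (i - 1) : ℝ)) ∧
      (n 1) ^ (((1 + α) ^ (i - 1) : ℝ)) ≤ n i) := by
  have hβ : (1 - ε / 2) * (1 + ε) = 1 + α := by rw [hα]; ring
  have hα0 : 0 ≤ α := by rw [hα]; nlinarith
  have hn1_3 : 3 ≤ n 1 := (le_max_left _ _).trans hn1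
  have hbase : c' * a ^ ((1 + α) ^ 2) ≤ n 1 ^ (ε / 2) := by
    rw [← inv_div, le_rpow_inv_iff_of_pos (by positivity) (by linarith) (by positivity)]
    exact (le_max_right _ _).trans hn1
  have hrec' (k : ℕ) := by simpa using hrec (k + 2) (by omega)
  have hbounds := le_rpow_half_and_rpow_pow_le_of_recurrence hε0.le hβ (by linarith) hc'
    (by linarith) (by linarith) hbase hrec'
  refine ⟨fun i hi => ?_, fun i hi => ?_, fun i hi => ?_⟩
  · obtain ⟨k, rfl⟩ := Nat.exists_eq_add_of_le' hi
    exact (hbounds k).1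
  · obtain ⟨k, rfl⟩ := Nat.exists_eq_add_of_le' hi
    obtain ⟨hK, hlow⟩ := hbounds k
    rw [← hβ]
    exact rpow_mul_le_of_div_rpow_le ((rpow_pos_of_pos (by linarith) _).trans_le hlow)
      (by positivity) (by linarith) hK (hrec' k)
  · obtain ⟨k, rfl⟩ := Nat.exists_eq_add_of_le' hi
    exact ⟨by gcongr, by simpa using (hbounds k).2⟩

/-- The numerical estimates in Corollary 25 (cor-sublin): growth of the sequence `(n_i)`. -/
theorem stmt_18 (ε α c' a : ℝ) (n : ℕ → ℝ)
    (hε0 : 0 < ε) (hε : ε ≤ 1 / 2) (hα : α = ε * (1 - ε) / 2)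
    (hc' : 1 ≤ c') (ha : 1 ≤ a)
    (hpos : ∀ i : ℕ, 1 ≤ i → 0 < n i)
    (hn1 : max 3 ((c' * a ^ ((1 + α) ^ 2 : ℝ)) ^ (2 / ε : ℝ)) ≤ n 1)
    (hrec : ∀ i : ℕ, 2 ≤ i →
      (n (i - 1) / (c' * a ^ (((1 + α) ^ i : ℝ)))) ^ (1 + ε : ℝ) ≤ n i) :
    (∀ i : ℕ, 1 ≤ i → c' * a ^ (((1 + α) ^ (i + 1) : ℝ)) ≤ (n i) ^ (ε / 2 : ℝ)) ∧
    (∀ i : ℕ, 2 ≤ i → (n (i - 1)) ^ (1 + α : ℝ) ≤ n i) ∧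
    (∀ i : ℕ, 1 ≤ i →
      (3 : ℝ) ^ (((1 + α) ^ (i - 1) : ℝ)) ≤ (n 1) ^ (((1 + α) ^ (i - 1) : ℝ)) ∧
      (n 1) ^ (((1 + α) ^ (i - 1) : ℝ)) ≤ n i) :=
  stmt_18_general ε α c' a n hε0 hε hα hc' ha hn1 hrec
end

section
/- Let t be a positive integer and let G be a graph such that every subgraph G' of G admits a walk-preserving overlay L = (H, f, ℓ) with the following properties: |V(H)| ≤ 2·|V(G')|; for every v ∈ V(G') there exists x ∈ f⁻¹(v) with ℓ(x) ≥ 1; and tw(H) ≤ t. Then every subgraph of G with at least one vertex has average degree at most 4t; consequently, every clique of G has at most 4t + 1 vertices and G has at most 2^{4t} · |V(G)| nonempty cliques. -/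
open SimpleGraph

/-!
Every edge `uw` of `G'` lifts to `H`: take a preimage `x` of `u` with `ℓ x ≥ 1`, and
walk-preservation gives a neighbour of `x` over `w`. So `|E(G')| ≤ |E(H)|`. A graph with a tree decomposition of width
`t` has at most `t·|V|` edges: root the tree and assign to each vertex its bag closest to the root;
since the bags containing a vertex form a subtree, for every edge the endpoint whose bag is farther
from the root has the other endpoint in its bag, so each vertex receives at most `t` edges. Hence
`|E(G')| ≤ t·|V(H)| ≤ 2t·|V(G')|` for every subgraph, i.e. `G` is `4t`-degenerate. In a clique
every vertex has all other vertices as neighbours, which gives the clique bound. For the count,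
remove a vertex `v` with at most `4t` neighbours in the current vertex set: the cliques through `v`
are `v` together with a subset of those neighbours, at most `2^{4t}` of them.
-/

namespace SimpleGraph

variable {T : Type*} {Tr : SimpleGraph T}

lemma Walk.IsPath.append {a m b : T} {p : Tr.Walk a m} {q : Tr.Walk m b} (hp : p.IsPath)
    (hq : q.IsPath) (hpq : ∀ z ∈ p.support, z ∈ q.support → z = m) : (p.append q).IsPath := by
  have hq' := hq.support_nodup
  rw [← q.cons_tail_support, List.nodup_cons] at hq'
  rw [Walk.isPath_def, Walk.support_append]
  refine hp.support_nodup.append hq'.2 fun z hzp hzq => ?_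
  exact hq'.1 (hpq z hzp (List.mem_of_mem_tail hzq) ▸ hzq)

lemma Walk.dist_lt_of_mem_support {a b z : T} (q : Tr.Walk a b) (hq : q.length = Tr.dist a b)
    (hz : z ∈ q.support) (hza : z ≠ a) : Tr.dist z b < Tr.dist a b := by
  classical
  exact hq ▸ (dist_le _).trans_lt (Walk.length_dropUntil_lt_length hz hza)

lemma Connected.exists_isPath_support_subset {S : Set T} (hS : (Tr.induce S).Connected)
    {a b : T} (ha : a ∈ S) (hb : b ∈ S) :
    ∃ p : Tr.Walk a b, p.IsPath ∧ ∀ z ∈ p.support, z ∈ S := by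
  classical
  obtain ⟨q⟩ := hS ⟨a, ha⟩ ⟨b, hb⟩
  let p := q.bypass.map (Embedding.induce S).toHom
  have hpS : ∀ z ∈ p.support, z ∈ S := by
    simp only [p, Walk.support_map, List.mem_map]
    rintro _ ⟨z, -, rfl⟩
    exact z.2
  exact ⟨p, q.bypass_isPath.map Subtype.val_injective, hpS⟩

lemma Connected.exists_isPath_append_of_isMinOn (hTr : Tr.Connected) {S : Set T}
    (hS : (Tr.induce S).Connected) {r s b : T} (hs : s ∈ S) (hmin : IsMinOn (Tr.dist · r) S s)
    (hb : b ∈ S) :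
    ∃ (p : Tr.Walk b s) (q : Tr.Walk s r), (p.append q).IsPath ∧ (∀ z ∈ p.support, z ∈ S) ∧
      q.length = Tr.dist s r := by
  obtain ⟨p, hp, hpS⟩ := hS.exists_isPath_support_subset hb hs
  obtain ⟨q, hq, hqlen⟩ := hTr.exists_path_of_dist s r
  refine ⟨p, q, hp.append hq fun z hzp hzq => ?_, hpS, hqlen⟩
  by_contra hzs
  exact (hmin (hpS z hzp)).not_gt (q.dist_lt_of_mem_support hqlen hzq hzs)

lemma IsTree.mem_of_isMinOn_dist (hT : Tr.IsTree) {r : T} {S S' : Set T}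
    (hS : (Tr.induce S).Connected) (hS' : (Tr.induce S').Connected) {s s' b : T}
    (hs : s ∈ S) (hmin : IsMinOn (Tr.dist · r) S s)
    (hs' : s' ∈ S') (hmin' : IsMinOn (Tr.dist · r) S' s')
    (hb : b ∈ S) (hb' : b ∈ S') (hle : Tr.dist s r ≤ Tr.dist s' r) : s' ∈ S := by
  obtain ⟨p, q, hpq, hpS, hq⟩ := hT.connected.exists_isPath_append_of_isMinOn hS hs hmin hb
  obtain ⟨p', q', hpq', -, -⟩ := hT.connected.exists_isPath_append_of_isMinOn hS' hs' hmin' hb'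
  have hpath : p'.append q' = p.append q :=
    congrArg Subtype.val ((hT.isAcyclic.subsingleton_path b r).elim ⟨_, hpq'⟩ ⟨_, hpq⟩)
  have hmem : s' ∈ (p.append q).support :=
    hpath ▸ (Walk.mem_support_append_iff _ _).mpr (Or.inl p'.end_mem_support)
  rcases (Walk.mem_support_append_iff _ _).mp hmem with hp | hq'
  · exact hpS s' hp
  · by_contra hs's
    exact (q.dist_lt_of_mem_support hq hq' (ne_of_mem_of_not_mem hs hs's).symm).not_ge hle

end SimpleGraph

section TreeDecomposition

variable {W T : Type} {H : SimpleGraph W} {Tr : SimpleGraph T} {β : T → Set W}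

/-- `top v` is the bag containing `v` closest to a fixed root of the tree. -/
lemma IsTreeDecomp.exists_orientation (hdec : IsTreeDecomp H Tr β) :
    ∃ top : W → T, (∀ v, v ∈ β (top v)) ∧
      ∀ ⦃u v⦄, H.Adj u v → u ∈ β (top v) ∨ v ∈ β (top u) := by
  obtain ⟨hT, hedge, hconn⟩ := hdec
  obtain ⟨r⟩ := hT.connected.nonempty
  have hmin : ∀ v, ∃ s, v ∈ β s ∧ IsMinOn (Tr.dist · r) {s | v ∈ β s} s := fun v => by
    obtain ⟨⟨s, hs⟩⟩ := (hconn v).nonempty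
    exact ⟨_, Function.argminOn_mem _ _ ⟨s, hs⟩,
      fun z hz => Function.argminOn_le (Tr.dist · r) {s | v ∈ β s} hz⟩
  choose top htop hmin using hmin
  refine ⟨top, htop, fun u v huv => ?_⟩
  obtain ⟨b, hub, hvb⟩ := hedge huv
  rcases le_total (Tr.dist (top u) r) (Tr.dist (top v) r) with h | h
  · exact .inl <| hT.mem_of_isMinOn_dist (hconn u) (hconn v) (htop u) (hmin u) (htop v) (hmin v)
      hub hvb h
  · exact .inr <| hT.mem_of_isMinOn_dist (hconn v) (hconn u) (htop v) (hmin v) (htop u) (hmin u)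
      hvb hub h

lemma SimpleGraph.ncard_edgeSet_le_of_forall_adj [Finite W] (H : SimpleGraph W) (A : W → Set W)
    {k : ℕ} (hA : ∀ v, (A v).ncard ≤ k) (hH : ∀ ⦃u v⦄, H.Adj u v → u ∈ A v ∨ v ∈ A u) :
    H.edgeSet.ncard ≤ k * Nat.card W := by
  have := Fintype.ofFinite W
  have hcover : H.edgeSet ⊆ ⋃ v, (fun u => s(u, v)) '' A v := by
    rintro ⟨u, v⟩ huv
    rcases hH huv with hu | hv
    · exact Set.mem_iUnion.mpr ⟨v, u, hu, rfl⟩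
    · exact Set.mem_iUnion.mpr ⟨u, v, hv, Sym2.eq_swap⟩
  calc H.edgeSet.ncard ≤ (⋃ v, (fun u => s(u, v)) '' A v).ncard := Set.ncard_le_ncard hcover
    _ ≤ ∑ v, ((fun u => s(u, v)) '' A v).ncard := Set.ncard_iUnion_le_of_fintype _
    _ ≤ ∑ _v : W, k :=
        Finset.sum_le_sum fun v _ => (Set.ncard_image_le (Set.toFinite _)).trans (hA v)
    _ = k * Nat.card W := by simp [mul_comm]

lemma IsTreeDecomp.ncard_edgeSet_le [Finite W] (hdec : IsTreeDecomp H Tr β) {t : ℕ}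
    (hwidth : ∀ s, (β s).ncard ≤ t + 1) : H.edgeSet.ncard ≤ t * Nat.card W := by
  obtain ⟨top, htop, horient⟩ := hdec.exists_orientation
  refine H.ncard_edgeSet_le_of_forall_adj (fun v => β (top v) \ {v}) (fun v => ?_)
    fun u v huv => (horient huv).imp (fun h => ⟨h, huv.ne⟩) fun h => ⟨h, huv.ne'⟩
  rw [Set.ncard_sdiff_singleton_of_mem (htop v)]
  exact Nat.sub_le_of_le_add (hwidth (top v))

lemma HasTwLE.ncard_edgeSet_le [Finite W] {t : ℕ} (h : HasTwLE H t) :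
    H.edgeSet.ncard ≤ t * Nat.card W := by
  obtain ⟨T, Tr, β, hdec, hwidth⟩ := h
  exact hdec.ncard_edgeSet_le fun s => by exact_mod_cast hwidth s

end TreeDecomposition

namespace SimpleGraph

variable {V : Type*} {G : SimpleGraph V}

lemma Subgraph.ncard_edgeSet_coe (G' : G.Subgraph) : G'.coe.edgeSet.ncard = G'.edgeSet.ncard := by
  rw [← Subgraph.image_coe_edgeSet_coe,
    Set.ncard_image_of_injective _ (Sym2.map.injective Subtype.coe_injective)]

def IsDegenerate (G : SimpleGraph V) (d : ℕ) : Prop :=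
  ∀ S : Finset V, S.Nonempty → ∃ v ∈ S, (G.neighborSet v ∩ S).ncard ≤ d

lemma isDegenerate_of_forall_subgraph {k : ℕ}
    (h : ∀ G' : G.Subgraph, G'.edgeSet.ncard ≤ k * G'.verts.ncard) : G.IsDegenerate (2 * k) := by
  classical
  intro S hS
  let G' := (⊤ : G.Subgraph).induce (S : Set V)
  have : Fintype G'.verts := Set.Finite.fintype S.finite_toSet
  have hdeg : ∀ a : G'.verts, G'.coe.degree a = (G.neighborSet a ∩ S).ncard := by
    intro a
    rw [← card_neighborFinset_eq_degree, ← Set.ncard_coe_finset, coe_neighborFinset,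
      ← Set.ncard_image_of_injective _ Subtype.val_injective]
    congr 1
    ext u
    simp [G', and_comm, show (a : V) ∈ S from a.2]
  have hsum : ∑ a : G'.verts, G'.coe.degree a ≤ ∑ _a : G'.verts, 2 * k := by
    calc ∑ a : G'.verts, G'.coe.degree a = 2 * G'.coe.edgeFinset.card := by
          convert G'.coe.sum_degrees_eq_twice_card_edges
      _ = 2 * G'.edgeSet.ncard := by
          rw [← Set.ncard_coe_finset, coe_edgeFinset, Subgraph.ncard_edgeSet_coe]
      _ ≤ 2 * (k * G'.verts.ncard) := Nat.mul_le_mul_left 2 (h G')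
      _ = ∑ _a : G'.verts, 2 * k := by
          rw [Finset.sum_const, Finset.card_univ, ← Nat.card_eq_fintype_card, Nat.card_coe_set_eq,
            smul_eq_mul]
          ring
  have : Nonempty G'.verts := hS.coe_sort
  obtain ⟨a, -, ha⟩ := Finset.exists_le_of_sum_le Finset.univ_nonempty hsum
  exact ⟨a, a.2, hdeg a ▸ ha⟩

lemma IsDegenerate.ncard_le_of_isClique [Finite V] {d : ℕ} (hG : G.IsDegenerate d) {K : Set V}
    (hK : G.IsClique K) : K.ncard ≤ d + 1 := by
  obtain ⟨S, rfl⟩ := K.toFinite.exists_finset_coe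
  rcases S.eq_empty_or_nonempty with rfl | hS
  · simp
  obtain ⟨v, hv, hdeg⟩ := hG S hS
  have hN : G.neighborSet v ∩ S = (S : Set V) \ {v} := by
    ext u
    exact ⟨fun ⟨hvu, hu⟩ => ⟨hu, hvu.ne'⟩, fun ⟨hu, huv⟩ => ⟨hK hv hu (Ne.symm huv), hu⟩⟩
  rw [hN, Set.ncard_sdiff_singleton_of_mem hv] at hdeg
  omega

lemma IsDegenerate.ncard_cliques_subset_le [Finite V] {d : ℕ} (hG : G.IsDegenerate d)
    (S : Finset V) :
    {K : Set V | G.IsClique K ∧ K.Nonempty ∧ K ⊆ S}.ncard ≤ 2 ^ d * S.card := by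
  classical
  induction S using Finset.strongInduction with | H S ih =>
  rcases S.eq_empty_or_nonempty with rfl | hS
  · simp [Set.nonempty_iff_ne_empty]
  obtain ⟨v, hv, hdeg⟩ := hG S hS
  have hsplit : {K : Set V | G.IsClique K ∧ K.Nonempty ∧ K ⊆ S} ⊆
      {K : Set V | G.IsClique K ∧ K.Nonempty ∧ K ⊆ S.erase v} ∪
        insert v '' 𝒫 (G.neighborSet v ∩ S) := by
    rintro K ⟨hK, hne, hKS⟩
    by_cases hvK : v ∈ K
    · refine .inr ⟨K \ {v}, fun u ⟨hu, huv⟩ => ⟨hK hvK hu (Ne.symm huv), hKS hu⟩, ?_⟩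
      rw [Set.insert_sdiff_singleton, Set.insert_eq_of_mem hvK]
    · exact .inl ⟨hK, hne, fun u hu => Finset.mem_erase.mpr ⟨ne_of_mem_of_not_mem hu hvK, hKS hu⟩⟩
  have hthrough : (insert v '' 𝒫 (G.neighborSet v ∩ S)).ncard ≤ 2 ^ d :=
    calc (insert v '' 𝒫 (G.neighborSet v ∩ S)).ncard
        ≤ (𝒫 (G.neighborSet v ∩ S)).ncard := Set.ncard_image_le (Set.toFinite _)
      _ = 2 ^ (G.neighborSet v ∩ S).ncard := Set.ncard_powerset _
      _ ≤ 2 ^ d := Nat.pow_le_pow_right two_pos hdeg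
  have hcard : (S.erase v).card + 1 = S.card := Finset.card_erase_add_one hv
  calc {K : Set V | G.IsClique K ∧ K.Nonempty ∧ K ⊆ S}.ncard
      ≤ {K : Set V | G.IsClique K ∧ K.Nonempty ∧ K ⊆ S.erase v}.ncard + 2 ^ d :=
        (Set.ncard_le_ncard hsplit).trans
          ((Set.ncard_union_le _ _).trans (Nat.add_le_add_left hthrough _))
    _ ≤ 2 ^ d * (S.erase v).card + 2 ^ d :=
        Nat.add_le_add_right (ih _ (Finset.erase_ssubset hv)) _
    _ = 2 ^ d * S.card := by rw [← hcard, Nat.mul_succ]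

end SimpleGraph

lemma WalkPres.ncard_edgeSet_le {V W : Type} [Finite W] {G : SimpleGraph V} {H : SimpleGraph W}
    {f : W → V} {ℓ : W → ℕ} (hwp : WalkPres H G f ℓ) (hℓ : ∀ v, ∃ x, f x = v ∧ 1 ≤ ℓ x) :
    G.edgeSet.ncard ≤ H.edgeSet.ncard := by
  have hlift : G.edgeSet ⊆ Sym2.map f '' H.edgeSet := by
    rintro ⟨u, w⟩ huw
    obtain ⟨x, rfl, hx⟩ := hℓ u
    obtain ⟨y, hxy, rfl, -⟩ := hwp x hx w huw
    exact ⟨s(x, y), hxy, rfl⟩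
  exact (Set.ncard_le_ncard hlift (Set.toFinite _)).trans (Set.ncard_image_le (Set.toFinite _))

theorem stmt_19_general {V : Type} [Fintype V] (G : SimpleGraph V) (t : ℕ)
    (hov : ∀ G' : G.Subgraph, ∃ L : Overlay G'.coe,
      WalkPres L.H G'.coe L.f L.ell ∧
      Nat.card L.W ≤ 2 * G'.verts.ncard ∧
      (∀ v : G'.verts, ∃ x : L.W, L.f x = v ∧ 1 ≤ L.ell x) ∧
      HasTwLE L.H t) :
    (∀ G' : G.Subgraph, G'.verts.Nonempty →
      (2 * G'.edgeSet.ncard : ℝ) / G'.verts.ncard ≤ 4 * t) ∧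
    (∀ K : Set V, G.IsClique K → K.ncard ≤ 4 * t + 1) ∧
    {K : Set V | G.IsClique K ∧ K.Nonempty}.ncard ≤ 2 ^ (4 * t) * Fintype.card V := by
  have hsparse : ∀ G' : G.Subgraph, G'.edgeSet.ncard ≤ 2 * t * G'.verts.ncard := by
    intro G'
    obtain ⟨L, hwp, hsize, hℓ, htw⟩ := hov G'
    have := L.finW
    calc G'.edgeSet.ncard = G'.coe.edgeSet.ncard := G'.ncard_edgeSet_coe.symm
      _ ≤ L.H.edgeSet.ncard := hwp.ncard_edgeSet_le hℓ
      _ ≤ t * Nat.card L.W := htw.ncard_edgeSet_le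
      _ ≤ t * (2 * G'.verts.ncard) := Nat.mul_le_mul_left t hsize
      _ = 2 * t * G'.verts.ncard := by ring
  have hdeg : G.IsDegenerate (4 * t) := by
    simpa only [← mul_assoc, show 2 * 2 = 4 from rfl] using isDegenerate_of_forall_subgraph hsparse
  refine ⟨fun G' hne => ?_, fun K hK => hdeg.ncard_le_of_isClique hK, ?_⟩
  · have hpos : (0 : ℝ) < G'.verts.ncard := by
      exact_mod_cast (Set.ncard_pos (Set.toFinite _)).mpr hne
    have hE : (G'.edgeSet.ncard : ℝ) ≤ 2 * t * G'.verts.ncard := by exact_mod_cast hsparse G'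
    rw [div_le_iff₀ hpos]
    linarith
  · simpa using hdeg.ncard_cliques_subset_le Finset.univ

/-- Lemma 9 (lemma-nume): if every subgraph `G'` of `G` admits a walk-preserving overlay
`(H, f, ℓ)` with `|V(H)| ≤ 2|V(G')|`, every vertex having a preimage with positive `ℓ`, and
`tw(H) ≤ t`, then every nonempty subgraph of `G` has average degree at most `4t`; hence all
cliques of `G` have at most `4t + 1` vertices and `G` has at most `2^{4t}·|V(G)|` nonempty
cliques. -/
theorem stmt_19 {V : Type} [Fintype V] (G : SimpleGraph V) (t : ℕ) (ht : 0 < t)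
    (hov : ∀ G' : G.Subgraph, ∃ L : Overlay G'.coe,
      WalkPres L.H G'.coe L.f L.ell ∧
      Nat.card L.W ≤ 2 * G'.verts.ncard ∧
      (∀ v : G'.verts, ∃ x : L.W, L.f x = v ∧ 1 ≤ L.ell x) ∧
      HasTwLE L.H t) :
    (∀ G' : G.Subgraph, G'.verts.Nonempty →
      (2 * G'.edgeSet.ncard : ℝ) / G'.verts.ncard ≤ 4 * t) ∧
    (∀ K : Set V, G.IsClique K → K.ncard ≤ 4 * t + 1) ∧
    {K : Set V | G.IsClique K ∧ K.Nonempty}.ncard ≤ 2 ^ (4 * t) * Fintype.card V :=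
  stmt_19_general G t hov
end
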